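/- arXiv:2507.08856 — 4 statements merged into one kernel-verified Lean document; each statement's English description precedes it below -/
import Mathlib

section
/- Let A be a unital *-subalgebra of L(H) for H a finite-dimensional complex Hilbert space, and let {P_1,...,P_p} be a maximal family of nonzero pairwise orthogonal self-adjoint projectors in A. Then for every j, the corner P_j A P_j equals ℂ·P_j, i.e., for every M ∈ A there exists λ ∈ ℂ with P_j M P_j = λ P_j. -/
/-!
If `P j * N * P j` is self-adjoint but not a multiple of `P j`, one of its spectral projections
`Q` (a real polynomial in it, hence in `A`) satisfies `0 < Q < P j`. Splitting `P j` into
`P j - Q` and `Q` gives an orthogonal family whose algebra contains that of `P`, so by maximality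
`Q` lies in the algebra generated by `P`. Every element of that algebra maps `P j` to a scalar
multiple of itself, so `Q = c • P j` with `c` idempotent, i.e. `Q = 0` or `Q = P j`.
A general `M` is handled through its real and imaginary parts.
-/

open scoped BigOperators

/-- A family of nonzero, self-adjoint, pairwise orthogonal projectors in `A`. -/
def IsOrthProjFamily {E : Type*} [NormedAddCommGroup E] [InnerProductSpace ℂ E]
    [FiniteDimensional ℂ E] (A : StarSubalgebra ℂ (E →ₗ[ℂ] E))
    {p : ℕ} (P : Fin p → (E →ₗ[ℂ] E)) : Prop :=
  (∀ i, P i ∈ A) ∧ (∀ i, P i ≠ 0) ∧ (∀ i, star (P i) = P i) ∧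
    (∀ i j, P i * P j = if i = j then P i else 0)

/-- Maximality: no such family spans a strictly larger subalgebra. -/
def IsMaximalOrthProjFamily {E : Type*} [NormedAddCommGroup E] [InnerProductSpace ℂ E]
    [FiniteDimensional ℂ E] (A : StarSubalgebra ℂ (E →ₗ[ℂ] E))
    {p : ℕ} (P : Fin p → (E →ₗ[ℂ] E)) : Prop :=
  IsOrthProjFamily A P ∧
    ∀ (m : ℕ) (Q : Fin m → (E →ₗ[ℂ] E)), IsOrthProjFamily A Q →
      ¬ Algebra.adjoin ℂ (Set.range P) < Algebra.adjoin ℂ (Set.range Q)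

open Polynomial ComplexStarModule Function

lemma exists_mul_eq_smul_of_mem_adjoin {R A : Type*} [CommSemiring R] [Semiring A] [Algebra R A]
    {s : Set A} {b : A} (hs : ∀ x ∈ s, ∃ c : R, x * b = c • b) {x : A}
    (hx : x ∈ Algebra.adjoin R s) : ∃ c : R, x * b = c • b := by
  induction hx using Algebra.adjoin_induction with
  | mem x hx => exact hs x hx
  | algebraMap r => exact ⟨r, Algebra.smul_def r b |>.symm⟩
  | add x y _ _ hx hy =>
    obtain ⟨c, hc⟩ := hx
    obtain ⟨d, hd⟩ := hy
    exact ⟨c + d, by rw [add_mul, hc, hd, add_smul]⟩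
  | mul x y _ _ hx hy =>
    obtain ⟨c, hc⟩ := hx
    obtain ⟨d, hd⟩ := hy
    exact ⟨d * c, by rw [mul_assoc, hd, mul_smul_comm, hc, smul_smul]⟩

lemma IsIdempotentElem.eq_zero_or_eq_of_eq_smul {K A : Type*} [Field K] [Ring A] [Algebra K A]
    [Module.IsTorsionFree K A] {p q : A} (hp : IsIdempotentElem p) (hp0 : p ≠ 0)
    (hq : IsIdempotentElem q) {c : K} (hqp : q = c • p) : q = 0 ∨ q = p := by
  have hc : IsIdempotentElem c := smul_left_injective K hp0 <|
    calc (c * c) • p = c • p * c • p := by rw [smul_mul_smul_comm, hp.eq]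
      _ = c • p := by rw [← hqp, hq.eq]
  rcases IsIdempotentElem.iff_eq_zero_or_one.1 hc with rfl | rfl <;> simp [hqp]

lemma OrthogonalIdempotents.update {R I : Type*} [Semiring R] [DecidableEq I] {e : I → R}
    (he : OrthogonalIdempotents e) (j : I) {x : R} (hx : IsIdempotentElem x)
    (hxl : e j * x = x) (hxr : x * e j = x) : OrthogonalIdempotents (update e j x) := by
  refine ⟨(forall_update_iff e fun _ y => IsIdempotentElem y).2
    ⟨hx, fun i _ => he.idem i⟩, fun i k hik => ?_⟩
  rcases eq_or_ne i j with rfl | hi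
  · rw [update_self, update_of_ne hik.symm, ← hxr, mul_assoc, he.ortho hik, mul_zero]
  rcases eq_or_ne k j with rfl | hk
  · rw [update_self, update_of_ne hi, ← hxl, ← mul_assoc, he.ortho hik, zero_mul]
  · rw [update_of_ne hi, update_of_ne hk, he.ortho hik]

lemma OrthogonalIdempotents.snoc {R : Type*} [Semiring R] {n : ℕ} {e : Fin n → R}
    (he : OrthogonalIdempotents e) {x : R} (hx : IsIdempotentElem x)
    (hxe : ∀ i, x * e i = 0) (hex : ∀ i, e i * x = 0) :
    OrthogonalIdempotents (Fin.snoc e x : Fin (n + 1) → R) := by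
  refine ⟨Fin.lastCases (by simpa using hx) fun i => by simpa using he.idem i, fun i k hik => ?_⟩
  induction i using Fin.lastCases with
  | last => induction k using Fin.lastCases with
    | last => exact absurd rfl hik
    | cast k => simpa using hxe k
  | cast i => induction k using Fin.lastCases with
    | last => simpa using hex i
    | cast k => simpa using he.ortho (Fin.castSucc_injective n |>.ne_iff.1 hik)

lemma IsSelfAdjoint.mul_eq_of_mul_eq_left {R : Type*} [Mul R] [StarMul R] {p q : R}
    (hp : IsSelfAdjoint p) (hq : IsSelfAdjoint q) (h : p * q = q) : q * p = q := by
  simpa [hp.star_eq, hq.star_eq] using congrArg star h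

section StarSubalgebra

variable {B : Type*} [Ring B] [StarRing B] [Algebra ℂ B] [StarModule ℂ B]
  (S : StarSubalgebra ℂ B) {x : B}

lemma StarSubalgebra.realPart_mem (hx : x ∈ S) : (ℜ x : B) ∈ S := by
  rw [realPart_apply_coe, ← Complex.coe_smul]
  exact S.smul_mem (add_mem hx (star_mem hx)) _

lemma StarSubalgebra.imaginaryPart_mem (hx : x ∈ S) : (ℑ x : B) ∈ S := by
  rw [imaginaryPart_apply_coe, ← Complex.coe_smul]
  exact S.smul_mem (S.smul_mem (sub_mem hx (star_mem hx)) _) _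

end StarSubalgebra

section Spectral

variable {𝕜 : Type*} [RCLike 𝕜]

lemma IsSelfAdjoint.aeval_map_ofReal {R : Type*} [Ring R] [StarRing R] [Algebra 𝕜 R]
    [StarModule 𝕜 R] {a : R} (ha : IsSelfAdjoint a) (q : ℝ[X]) :
    IsSelfAdjoint (aeval a (q.map (algebraMap ℝ 𝕜))) := by
  rw [aeval_eq_sum_range]
  refine isSelfAdjoint_sum _ fun i _ => IsSelfAdjoint.smul ?_ (ha.pow i)
  rw [coeff_map]
  exact RCLike.conj_ofReal _

variable {E : Type*} [NormedAddCommGroup E] [InnerProductSpace 𝕜 E] [FiniteDimensional 𝕜 E]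
  {T : E →ₗ[𝕜] E}

lemma LinearMap.IsSymmetric.exists_aeval_apply_eigenvectorBasis (hT : T.IsSymmetric)
    {n : ℕ} (hn : Module.finrank 𝕜 E = n) (f : ℝ → ℝ) :
    ∃ q : ℝ[X], ∀ i : Fin n, aeval T (q.map (algebraMap ℝ 𝕜)) (hT.eigenvectorBasis hn i) =
      (f (hT.eigenvalues hn i) : 𝕜) • hT.eigenvectorBasis hn i := by
  refine ⟨Lagrange.interpolate (Finset.univ.image (hT.eigenvalues hn)) _root_.id f, fun i => ?_⟩
  have hv : Module.End.HasEigenvector T (hT.eigenvalues hn i) (hT.eigenvectorBasis hn i) :=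
    ⟨Module.End.mem_eigenspace_iff.2 (hT.apply_eigenvectorBasis hn i),
      (hT.eigenvectorBasis hn).orthonormal.ne_zero i⟩
  rw [Module.End.aeval_apply_of_hasEigenvector hv, ← RCLike.algebraMap_eq_ofReal,
    eval_map_algebraMap, aeval_algebraMap_apply_eq_algebraMap_eval,
    ← id_eq (hT.eigenvalues hn i),
    Lagrange.eval_interpolate_at_node f (Set.injOn_id _)
      (Finset.mem_image_of_mem _ (Finset.mem_univ i))]
  rfl

lemma LinearMap.IsSymmetric.exists_isStarProjection_mul_eq_smul (hT : T.IsSymmetric)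
    (hT0 : T ≠ 0) :
    ∃ μ : 𝕜, μ ≠ 0 ∧ ∃ Q ∈ Algebra.adjoin 𝕜 {T}, IsStarProjection Q ∧ Q ≠ 0 ∧ T * Q = μ • Q := by
  obtain ⟨n, hn⟩ : ∃ n, Module.finrank 𝕜 E = n := ⟨_, rfl⟩
  set b := hT.eigenvectorBasis hn
  set e := hT.eigenvalues hn
  obtain ⟨i₀, hi₀⟩ : ∃ i, e i ≠ 0 := by
    by_contra! h
    exact hT0 (b.toBasis.ext fun i => by simp [b, hT.apply_eigenvectorBasis, e, h i])
  obtain ⟨q, hq⟩ := hT.exists_aeval_apply_eigenvectorBasis hn fun x => if x = e i₀ then 1 else 0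
  set Q := aeval T (q.map (algebraMap ℝ 𝕜))
  have hQ : ∀ i, Q (b i) = if e i = e i₀ then b i else 0 := fun i => by
    rw [hq]; split_ifs <;> simp [b]
  refine ⟨e i₀, RCLike.ofReal_ne_zero.2 hi₀, Q, ?_, ⟨?_, ?_⟩, fun h => ?_,
    b.toBasis.ext fun i => ?_⟩
  · rw [Algebra.adjoin_singleton_eq_range_aeval]
    exact ⟨_, rfl⟩
  · refine b.toBasis.ext fun i => ?_
    simp only [OrthonormalBasis.coe_toBasis, Module.End.mul_apply, hQ]
    split_ifs <;> simp [*]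
  · exact ((T.isSymmetric_iff_isSelfAdjoint).1 hT).aeval_map_ofReal q
  · exact b.orthonormal.ne_zero i₀ (by simpa [h] using (hQ i₀).symm)
  · simp only [OrthonormalBasis.coe_toBasis, Module.End.mul_apply, LinearMap.smul_apply, hQ]
    split_ifs with h
    · rw [hT.apply_eigenvectorBasis]
      exact congrArg (fun c : ℝ => (c : 𝕜) • b i) h
    · simp

end Spectral

section Families

variable {E : Type*} [NormedAddCommGroup E] [InnerProductSpace ℂ E] [FiniteDimensional ℂ E]
  {A : StarSubalgebra ℂ (E →ₗ[ℂ] E)} {p : ℕ} {P : Fin p → (E →ₗ[ℂ] E)}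

lemma isOrthProjFamily_iff :
    IsOrthProjFamily A P ↔ (∀ i, P i ∈ A) ∧ (∀ i, P i ≠ 0) ∧ (∀ i, IsSelfAdjoint (P i)) ∧
      OrthogonalIdempotents P := by
  rw [OrthogonalIdempotents.iff_mul_eq]
  rfl

lemma IsOrthProjFamily.snoc_update (hP : IsOrthProjFamily A P) (j : Fin p) {Q : E →ₗ[ℂ] E}
    (hQA : Q ∈ A) (hQ : IsStarProjection Q) (hjQ : P j * Q = Q) (hQ0 : Q ≠ 0) (hQP : Q ≠ P j) :
    IsOrthProjFamily A (Fin.snoc (update P j (P j - Q)) Q) := by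
  rw [isOrthProjFamily_iff] at hP ⊢
  obtain ⟨hA, h0, hs, ho⟩ := hP
  have hQj : Q * P j = Q := (hs j).mul_eq_of_mul_eq_left hQ.isSelfAdjoint hjQ
  have hsub : IsStarProjection (P j - Q) := hQ.sub_of_mul_eq_left ⟨ho.idem j, hs j⟩ hQj
  have hQi : ∀ i ≠ j, Q * P i = 0 := fun i hi => by
    rw [← hQj, mul_assoc, ho.ortho hi.symm, mul_zero]
  have hiQ : ∀ i ≠ j, P i * Q = 0 := fun i hi => by
    rw [← hjQ, ← mul_assoc, ho.ortho hi, zero_mul]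
  simp only [Fin.forall_fin_succ', Fin.snoc_castSucc, Fin.snoc_last]
  refine ⟨⟨?_, hQA⟩, ⟨?_, hQ0⟩, ⟨?_, hQ.isSelfAdjoint⟩, ?_⟩
  · exact (forall_update_iff P fun _ x => x ∈ A).2 ⟨sub_mem (hA j) hQA, fun i _ => hA i⟩
  · exact (forall_update_iff P fun _ x => x ≠ 0).2
      ⟨sub_ne_zero.2 hQP.symm, fun i _ => h0 i⟩
  · exact (forall_update_iff P fun _ x => IsSelfAdjoint x).2
      ⟨hsub.isSelfAdjoint, fun i _ => hs i⟩
  refine (ho.update j hsub.isIdempotentElem ?_ ?_).snoc hQ.isIdempotentElem ?_ ?_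
  · rw [mul_sub, (ho.idem j).eq, hjQ]
  · rw [sub_mul, (ho.idem j).eq, hQj]
  · exact (forall_update_iff P fun _ x => Q * x = 0).2
      ⟨by rw [mul_sub, hQj, hQ.isIdempotentElem.eq, sub_self], hQi⟩
  · exact (forall_update_iff P fun _ x => x * Q = 0).2
      ⟨by rw [sub_mul, hjQ, hQ.isIdempotentElem.eq, sub_self], hiQ⟩

lemma IsMaximalOrthProjFamily.eq_zero_or_eq_of_mul_eq (hP : IsMaximalOrthProjFamily A P)
    (j : Fin p) {Q : E →ₗ[ℂ] E} (hQA : Q ∈ A) (hQ : IsStarProjection Q) (hjQ : P j * Q = Q) :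
    Q = 0 ∨ Q = P j := by
  by_contra! ⟨hQ0, hQP⟩
  set R : Fin (p + 1) → (E →ₗ[ℂ] E) := Fin.snoc (update P j (P j - Q)) Q
  have hQR : Q ∈ Algebra.adjoin ℂ (Set.range R) :=
    Algebra.subset_adjoin ⟨Fin.last p, Fin.snoc_last _ _⟩
  have hle : Algebra.adjoin ℂ (Set.range P) ≤ Algebra.adjoin ℂ (Set.range R) := by
    refine Algebra.adjoin_le (Set.range_subset_iff.2 fun i => ?_)
    rcases eq_or_ne i j with rfl | hi
    · have hsub : P i - Q ∈ Algebra.adjoin ℂ (Set.range R) :=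
        Algebra.subset_adjoin ⟨i.castSucc, by simp only [R, Fin.snoc_castSucc, update_self]⟩
      simpa using add_mem hsub hQR
    · exact Algebra.subset_adjoin ⟨i.castSucc, by simp only [R, Fin.snoc_castSucc, update_of_ne hi]⟩
  have hR := hP.1.snoc_update j hQA hQ hjQ hQ0 hQP
  have hQ_mem : Q ∈ Algebra.adjoin ℂ (Set.range P) := hle.eq_of_not_lt (hP.2 _ R hR) ▸ hQR
  obtain ⟨-, h0, hs, ho⟩ := isOrthProjFamily_iff.1 hP.1
  obtain ⟨c, hc⟩ := exists_mul_eq_smul_of_mem_adjoin (b := P j) (by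
    rintro _ ⟨i, rfl⟩
    classical
    exact ⟨if i = j then 1 else 0, by rw [ho.mul_eq]; split_ifs <;> simp_all⟩) hQ_mem
  have hQj : Q * P j = Q := (hs j).mul_eq_of_mul_eq_left hQ.isSelfAdjoint hjQ
  rcases (ho.idem j).eq_zero_or_eq_of_eq_smul (h0 j) hQ.isIdempotentElem (hQj ▸ hc) with h | h
  exacts [hQ0 h, hQP h]

lemma IsMaximalOrthProjFamily.exists_mul_mul_eq_smul_of_isSelfAdjoint
    (hP : IsMaximalOrthProjFamily A P) (j : Fin p) {N : E →ₗ[ℂ] E} (hNA : N ∈ A)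
    (hN : IsSelfAdjoint N) : ∃ c : ℂ, P j * N * P j = c • P j := by
  obtain ⟨hA, -, hs, ho⟩ := isOrthProjFamily_iff.1 hP.1
  set T := P j * N * P j
  have hPj : P j * P j = P j := (ho.idem j).eq
  have hjT : P j * T = T := by simp only [T, ← mul_assoc, hPj]
  have hTj : T * P j = T := by simp only [T, mul_assoc, hPj]
  by_contra! hT
  have hTs : T.IsSymmetric :=
    (T.isSymmetric_iff_isSelfAdjoint).2 (by simpa [(hs j).star_eq] using hN.conjugate (P j))
  obtain ⟨μ, hμ, Q, hQT, hQ, hQ0, hTQ⟩ :=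
    hTs.exists_isStarProjection_mul_eq_smul (by simpa using hT 0)
  have hQA : Q ∈ A :=
    Algebra.adjoin_le (Set.singleton_subset_iff.2 (mul_mem (mul_mem (hA j) hNA) (hA j))) hQT
  have hjQ : P j * Q = Q := by
    have hQ_eq : Q = μ⁻¹ • (T * Q) := by rw [hTQ, smul_smul, inv_mul_cancel₀ hμ, one_smul]
    rw [hQ_eq, mul_smul_comm, ← mul_assoc, hjT]
  rcases hP.eq_zero_or_eq_of_mul_eq j hQA hQ hjQ with h | h
  · exact hQ0 h
  · exact hT μ (by rw [← hTj, ← h, hTQ])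

end Families

theorem corner_eq_scalar
    {E : Type*} [NormedAddCommGroup E] [InnerProductSpace ℂ E] [FiniteDimensional ℂ E]
    (A : StarSubalgebra ℂ (E →ₗ[ℂ] E)) {p : ℕ} (P : Fin p → (E →ₗ[ℂ] E))
    (hP : IsMaximalOrthProjFamily A P) :
    ∀ j, ∀ M ∈ A, ∃ lam : ℂ, P j * M * P j = lam • P j := by
  intro j M hM
  obtain ⟨a, ha⟩ := hP.exists_mul_mul_eq_smul_of_isSelfAdjoint j (A.realPart_mem hM) (ℜ M).2
  obtain ⟨b, hb⟩ := hP.exists_mul_mul_eq_smul_of_isSelfAdjoint j (A.imaginaryPart_mem hM) (ℑ M).2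
  refine ⟨a + Complex.I * b, ?_⟩
  conv_lhs => rw [← realPart_add_I_smul_imaginaryPart M]
  rw [mul_add, add_mul, ha, mul_smul_comm, smul_mul_assoc, hb, add_smul, smul_smul]
end

section
/- (Artin–Wedderburn for finite-dimensional von Neumann algebras) Let H be a finite-dimensional complex Hilbert space and A ⊆ L(H) a unital *-subalgebra. Then there exist finite families of finite-dimensional Hilbert spaces (H_L^k) and (H_R^k) and a unitary U : H → ⊕_k (H_L^k ⊗ H_R^k) such that U A U† = ⊕_k (L(H_L^k) ⊗ 1_{H_R^k}). -/
/-!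
Decompose `E` into an orthogonal sum of minimal `A`-invariant subspaces `W t`; orthogonal
complements of invariant subspaces are invariant because `A` is closed under adjoints. Write `P[V]`
for the orthogonal projection onto `V`. By Schur's lemma, for `c` in the commutant `A'` the
compression `P[V] c P[V]` to a minimal `V` is a scalar, and `P[W] c P[V]` is zero or a multiple
of a partial isometry in `A'` from `V` onto `W`. Grouping the `W t` into classes of equivalent ones
and transporting an orthonormal basis of one member of each class along these partial isometries
gives a basis in which `A` acts by `⨁ₖ Tₖ ⊗ 1` and `A'` by `⨁ₖ 1 ⊗ Sₖ`. Conversely every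
`⨁ₖ Tₖ ⊗ 1` then commutes with `A'`, hence lies in `A'' = A`; this double commutant theorem is the
Jacobson density theorem for the semisimple `A`-module `E`.
-/

open scoped InnerProductSpace
open Module

theorem Setoid.exists_sigma_fin_equiv {ι : Type*} [Fintype ι] (r : Setoid ι) :
    ∃ (n : ℕ) (d : Fin n → ℕ) (e : (Σ k : Fin n, Fin (d k)) ≃ ι),
      (∀ k, 0 < d k) ∧ ∀ s t, r (e s) (e t) ↔ s.1 = t.1 := by
  classical
  let f : ι → Fin (Fintype.card (Quotient r)) := fun i => Fintype.equivFin _ ⟦i⟧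
  have hf : ∀ i j, r i j ↔ f i = f j := fun i j => by simp [f, Quotient.eq]
  let e : (Σ k, Fin (Fintype.card {i // f i = k})) ≃ ι :=
    (Equiv.sigmaCongrRight fun k => (Fintype.equivFin _).symm).trans (Equiv.sigmaFiberEquiv f)
  have he : ∀ s, f (e s) = s.1 := fun s => ((Fintype.equivFin _).symm s.2).2
  refine ⟨_, _, e, fun k => Fintype.card_pos_iff.mpr ?_, fun s t => by rw [hf, he, he]⟩
  obtain ⟨i, hi⟩ := Quotient.exists_rep ((Fintype.equivFin _).symm k)
  exact ⟨⟨i, by simp [f, hi]⟩⟩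

section Blocks

variable {𝕜 M N : Type*} [CommSemiring 𝕜] [AddCommMonoid M] [Module 𝕜 M] {ι : Type*}
  {L R : ι → Type*}

/-- `X` acts on the family `v` as `⨁ₖ Tₖ ⊗ 1`, where `v ⟨k, p, j⟩` stands for `eₚ ⊗ fⱼ` in the
`k`-th summand. -/
def ActsAsLeftBlocks [∀ k, Fintype (L k)] (v : (Σ k, L k × R k) → M) (X : M →ₗ[𝕜] M)
    (T : ∀ k, Matrix (L k) (L k) 𝕜) : Prop :=
  ∀ k q j, X (v ⟨k, q, j⟩) = ∑ p, T k p q • v ⟨k, p, j⟩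

def ActsAsRightBlocks [∀ k, Fintype (R k)] (v : (Σ k, L k × R k) → M) (X : M →ₗ[𝕜] M)
    (S : ∀ k, Matrix (R k) (R k) 𝕜) : Prop :=
  ∀ k q j, X (v ⟨k, q, j⟩) = ∑ j', S k j' j • v ⟨k, q, j'⟩

variable [∀ k, Fintype (L k)] {X Y : M →ₗ[𝕜] M} {T : ∀ k, Matrix (L k) (L k) 𝕜}

theorem ActsAsLeftBlocks.commute [∀ k, Fintype (R k)] {S : ∀ k, Matrix (R k) (R k) 𝕜}
    {b : Basis (Σ k, L k × R k) 𝕜 M} (hX : ActsAsLeftBlocks b X T)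
    (hY : ActsAsRightBlocks b Y S) : Commute X Y :=
  b.ext fun ⟨k, q, j⟩ => by
    simp only [Module.End.mul_apply, hX k q j, hY k q j, map_sum, map_smul, hX k q, hY k _ j,
      Finset.smul_sum, smul_smul]
    rw [Finset.sum_comm]
    simp only [mul_comm]

theorem ActsAsLeftBlocks.eq {b : Basis (Σ k, L k × R k) 𝕜 M} (hX : ActsAsLeftBlocks b X T)
    (hY : ActsAsLeftBlocks b Y T) : X = Y :=
  b.ext fun ⟨k, q, j⟩ => (hX k q j).trans (hY k q j).symm

theorem actsAsLeftBlocks_conj_iff [AddCommMonoid N] [Module 𝕜 N] (e : M ≃ₗ[𝕜] N)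
    (v : (Σ k, L k × R k) → M) :
    ActsAsLeftBlocks (e ∘ v) (e.conj X) T ↔ ActsAsLeftBlocks v X T := by
  simp only [ActsAsLeftBlocks, Function.comp_apply, LinearEquiv.conj_apply_apply,
    LinearEquiv.symm_apply_apply, ← map_smul, ← map_sum, e.injective.eq_iff]

end Blocks

section EuclideanBlocks

variable {𝕜 : Type*} [RCLike 𝕜] {ι : Type*} [DecidableEq ι] {dL dR : ι → ℕ}

def blockDiag (T : ∀ k, Matrix (Fin (dL k)) (Fin (dL k)) 𝕜) :
    EuclideanSpace 𝕜 (Σ k, Fin (dL k) × Fin (dR k)) →ₗ[𝕜]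
      EuclideanSpace 𝕜 (Σ k, Fin (dL k) × Fin (dR k)) where
  toFun x := WithLp.toLp 2 fun i => ∑ a, T i.1 i.2.1 a * x ⟨i.1, a, i.2.2⟩
  map_add' x y := by ext i; simp [mul_add, Finset.sum_add_distrib]
  map_smul' c x := by ext i; simp [Finset.mul_sum, mul_left_comm]

theorem actsAsLeftBlocks_blockDiag (T : ∀ k, Matrix (Fin (dL k)) (Fin (dL k)) 𝕜) :
    ActsAsLeftBlocks (fun s => EuclideanSpace.single s (1 : 𝕜)) (blockDiag (dR := dR) T) T := by
  intro k q j
  ext ⟨k', p', j'⟩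
  simp only [blockDiag, LinearMap.coe_mk, AddHom.coe_mk, PiLp.toLp_apply, WithLp.ofLp_sum,
    WithLp.ofLp_smul, Finset.sum_apply, Pi.smul_apply, PiLp.ofLp_single, smul_eq_mul]
  by_cases hk : k' = k
  · subst hk
    by_cases hj : j' = j
    · subst hj
      simp [Pi.single_apply, Finset.sum_ite_eq', Finset.sum_ite_eq]
    · simp [hj]
  · simp [hk]

theorem actsAsLeftBlocks_single_iff [Fintype ι]
    {f : EuclideanSpace 𝕜 (Σ k, Fin (dL k) × Fin (dR k)) →ₗ[𝕜]
      EuclideanSpace 𝕜 (Σ k, Fin (dL k) × Fin (dR k))}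
    {T : ∀ k, Matrix (Fin (dL k)) (Fin (dL k)) 𝕜} :
    ActsAsLeftBlocks (fun s => EuclideanSpace.single s (1 : 𝕜)) f T ↔
      ∀ x i, f x i = ∑ a, T i.1 i.2.1 a * x ⟨i.1, a, i.2.2⟩ := by
  have hb : ⇑(EuclideanSpace.basisFun (Σ k, Fin (dL k) × Fin (dR k)) 𝕜).toBasis =
      fun s => EuclideanSpace.single s 1 := by ext; simp
  constructor
  · intro hf x i
    rw [(hb ▸ hf : ActsAsLeftBlocks _ f T).eq (hb ▸ actsAsLeftBlocks_blockDiag T)]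
    rfl
  · intro hf
    convert actsAsLeftBlocks_blockDiag T
    exact LinearMap.ext fun x => PiLp.ext (hf x)

end EuclideanBlocks

namespace StarSubalgebra

variable {R : Type*} [Ring R] [StarRing R] [Algebra ℂ R] [StarModule ℂ R] (B : StarSubalgebra ℂ R)

/-- Murray–von Neumann equivalence of `p` and `q` in `B`. -/
def MvNEquiv (p q : R) : Prop := ∃ u ∈ B, star u * u = p ∧ u * star u = q

variable {B}

theorem MvNEquiv.refl {p : R} (hp : IsStarProjection p) (hpB : p ∈ B) : B.MvNEquiv p p :=
  ⟨p, hpB, by rw [hp.isSelfAdjoint.star_eq, hp.isIdempotentElem.eq],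
    by rw [hp.isSelfAdjoint.star_eq, hp.isIdempotentElem.eq]⟩

theorem MvNEquiv.symm {p q : R} : B.MvNEquiv p q → B.MvNEquiv q p
  | ⟨u, hu, h₁, h₂⟩ => ⟨star u, star_mem hu, by rwa [star_star], by rwa [star_star]⟩

theorem MvNEquiv.trans {p q r : R} (hp : IsIdempotentElem p) (hr : IsIdempotentElem r) :
    B.MvNEquiv p q → B.MvNEquiv q r → B.MvNEquiv p r
  | ⟨u, hu, hu₁, hu₂⟩, ⟨v, hv, hv₁, hv₂⟩ => ⟨v * u, mul_mem hv hu, by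
      rw [star_mul, mul_assoc, ← mul_assoc (star v), hv₁, ← hu₂, mul_assoc u,
        ← mul_assoc (star u), hu₁, hp.eq], by
      rw [star_mul, mul_assoc, ← mul_assoc u, hu₂, ← hv₁, mul_assoc (star v), ← mul_assoc v, hv₂,
        hr.eq]⟩

theorem MvNEquiv.of_star_mul_self_eq_smul {t p q : R} (ht : t ∈ B) {r : ℝ} (hr : r ≠ 0)
    (h₁ : star t * t = (r : ℂ) ^ 2 • p) (h₂ : t * star t = (r : ℂ) ^ 2 • q) : B.MvNEquiv p q := by
  have hs : star (r : ℂ)⁻¹ = (r : ℂ)⁻¹ := by simp [Complex.conj_ofReal]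
  have hrr : (r : ℂ)⁻¹ * (r : ℂ)⁻¹ * (r : ℂ) ^ 2 = 1 := by
    have : (r : ℂ) ≠ 0 := Complex.ofReal_ne_zero.mpr hr
    field_simp
  refine ⟨(r : ℂ)⁻¹ • t, SMulMemClass.smul_mem _ ht, ?_, ?_⟩
  · rw [star_smul, hs, smul_mul_smul, h₁, smul_smul, hrr, one_smul]
  · rw [star_smul, hs, smul_mul_smul, h₂, smul_smul, hrr, one_smul]

end StarSubalgebra

section Operators

variable {E : Type*} [NormedAddCommGroup E] [InnerProductSpace ℂ E] [FiniteDimensional ℂ E]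

local notation "P[" V "]" => ContinuousLinearMap.toLinearMap (Submodule.starProjection V)

theorem Submodule.isStarProjection_coe_starProjection (V : Submodule ℂ E) :
    IsStarProjection P[V] :=
  LinearMap.isStarProjection_iff_isSymmetricProjection.mpr V.isSymmetricProjection_starProjection

theorem Submodule.coe_starProjection_mul_self (V : Submodule ℂ E) : P[V] * P[V] = P[V] :=
  V.isStarProjection_coe_starProjection.isIdempotentElem.eq

theorem Submodule.star_coe_starProjection (V : Submodule ℂ E) : star P[V] = P[V] :=
  V.isStarProjection_coe_starProjection.isSelfAdjoint.star_eq

section PartialIsometry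

variable {u : E →ₗ[ℂ] E} {V W : Submodule ℂ E}

theorem LinearMap.mul_starProjection_eq_self (h₁ : star u * u = P[V]) : u * P[V] = u := by
  refine LinearMap.ext fun x => (sub_eq_zero.mp ?_).symm
  -- `u` vanishes on `Vᗮ` because `‖u y‖² = ⟪y, P[V] y⟫`
  have hy : x - V.starProjection x ∈ Vᗮ := V.sub_starProjection_mem_orthogonal x
  have h := congrArg (⟪x - V.starProjection x, · (x - V.starProjection x)⟫_ℂ) h₁
  simp only [LinearMap.star_eq_adjoint, Module.End.mul_apply, LinearMap.adjoint_inner_right,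
    ContinuousLinearMap.coe_coe, (V.starProjection_apply_eq_zero_iff).mpr hy, inner_zero_right,
    inner_self_eq_zero] at h
  simpa [map_sub] using h

theorem LinearMap.starProjection_mul_star_eq_self (h₁ : star u * u = P[V]) :
    P[V] * star u = star u := by
  rw [← V.star_coe_starProjection, ← star_mul, u.mul_starProjection_eq_self h₁]

theorem LinearMap.starProjection_mul_eq_self (h₁ : star u * u = P[V]) (h₂ : u * star u = P[W]) :
    P[W] * u = u := by
  rw [← h₂, mul_assoc, h₁, u.mul_starProjection_eq_self h₁]

theorem LinearMap.star_mul_starProjection_eq_self (h₁ : star u * u = P[V])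
    (h₂ : u * star u = P[W]) : star u * P[W] = star u := by
  rw [← W.star_coe_starProjection, ← star_mul, u.starProjection_mul_eq_self h₁ h₂]

theorem OrthonormalBasis.exists_map_partialIsometry {κ : Type*} [Fintype κ]
    (h₁ : star u * u = P[V]) (h₂ : u * star u = P[W]) (f : OrthonormalBasis κ ℂ V) :
    ∃ g : OrthonormalBasis κ ℂ W, ∀ i, (g i : E) = u (f i) := by
  have hVW : ∀ x ∈ V, u x ∈ W := fun x _ => by
    rw [← u.starProjection_mul_eq_self h₁ h₂]
    exact W.starProjection_apply_mem _
  have hinner : ∀ x y : V, ⟪u.restrict hVW x, u.restrict hVW y⟫_ℂ = ⟪x, y⟫_ℂ := fun x y => by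
    simp only [Submodule.coe_inner, LinearMap.coe_restrict_apply]
    rw [← LinearMap.adjoint_inner_right, ← LinearMap.star_eq_adjoint, ← Module.End.mul_apply, h₁,
      ContinuousLinearMap.coe_coe, Submodule.starProjection_eq_self_iff.mpr y.2]
  have hsurj : Function.Surjective (u.restrict hVW) := fun y =>
    ⟨⟨star u y, u.starProjection_mul_star_eq_self h₁ ▸ V.starProjection_apply_mem _⟩,
      Subtype.ext <| by
        rw [LinearMap.coe_restrict_apply, ← Module.End.mul_apply, h₂, ContinuousLinearMap.coe_coe,
          Submodule.starProjection_eq_self_iff.mpr y.2]⟩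
  exact ⟨f.map (.ofSurjective ((u.restrict hVW).isometryOfInner hinner) hsurj), fun i => rfl⟩

theorem OrthonormalBasis.exists_sigma_map_partialIsometry {ι : Type*} [Fintype ι] {L R : ι → Type*}
    [∀ k, Fintype (L k)] [∀ k, Fintype (R k)] {W : (Σ k, R k) → Submodule ℂ E}
    {M : ι → Submodule ℂ E} {u : (Σ k, R k) → E →ₗ[ℂ] E}
    (hW : OrthogonalFamily ℂ (fun t => W t) fun t => (W t).subtypeₗᵢ) (hsup : iSup W = ⊤)
    (h₁ : ∀ t, star (u t) * u t = P[M t.1]) (h₂ : ∀ t, u t * star (u t) = P[W t])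
    (f : ∀ k, OrthonormalBasis (L k) ℂ (M k)) :
    ∃ b : OrthonormalBasis (Σ k, L k × R k) ℂ E, ∀ k q j, b ⟨k, q, j⟩ = u ⟨k, j⟩ (f k q) := by
  classical
  choose g hg using fun t => (f t.1).exists_map_partialIsometry (h₁ t) (h₂ t)
  have hint : DirectSum.IsInternal fun t => W t :=
    hW.isInternal_iff.mpr (by rw [hsup, Submodule.top_orthogonal_eq_bot])
  refine ⟨(hint.collectedOrthonormalBasis hW g).reindex ((Equiv.sigmaAssoc fun k _ => L k).trans
    (Equiv.sigmaCongrRight fun _ => (Equiv.sigmaEquivProd _ _).trans (Equiv.prodComm _ _))),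
    fun k q j => ?_⟩
  simp [OrthonormalBasis.reindex_apply, DirectSum.IsInternal.collectedOrthonormalBasis, hg]
  rfl

end PartialIsometry

namespace StarSubalgebra

variable (A : StarSubalgebra ℂ (E →ₗ[ℂ] E))

instance : IsScalarTower ℂ A E := ⟨fun _ _ _ => rfl⟩

noncomputable abbrev commutant : StarSubalgebra ℂ (E →ₗ[ℂ] E) := centralizer ℂ (A : Set (E →ₗ[ℂ] E))

def IsInvariant (V : Submodule ℂ E) : Prop := ∀ a ∈ A, V ∈ End.invtSubmodule a

def IsMinimalInvariant (V : Submodule ℂ E) : Prop :=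
  A.IsInvariant V ∧ V ≠ ⊥ ∧ ∀ W ≤ V, A.IsInvariant W → W = ⊥ ∨ W = V

theorem isSemisimpleModule : IsSemisimpleModule A E where
  exists_isCompl p := by
    let V := p.restrictScalars ℂ
    let q : Submodule A E :=
      { carrier := Vᗮ
        add_mem' := Vᗮ.add_mem
        zero_mem' := Vᗮ.zero_mem
        smul_mem' := fun a x hx => (Submodule.mem_orthogonal V _).mpr fun y hy => by
          change ⟪y, (a : E →ₗ[ℂ] E) x⟫_ℂ = 0
          rw [← LinearMap.adjoint_inner_left, ← LinearMap.star_eq_adjoint]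
          exact hx _ (p.smul_mem (star a) hy) }
    refine ⟨q, ?_, ?_⟩
    · rw [Submodule.disjoint_def]
      exact fun x hx hx' => inner_self_eq_zero.mp (hx' x hx)
    · rw [codisjoint_iff, Submodule.eq_top_iff']
      intro x
      rw [← V.starProjection_add_starProjection_orthogonal x]
      exact Submodule.add_mem_sup (V.starProjection_apply_mem x) (Vᗮ.starProjection_apply_mem x)

theorem centralizer_centralizer_eq_self :
    centralizer ℂ (centralizer ℂ (A : Set (E →ₗ[ℂ] E)) : Set (E →ₗ[ℂ] E)) = A := by
  classical
  refine le_antisymm (fun g hg => ?_) fun a ha =>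
    StarAlgebra.adjoin_le_centralizer_centralizer ℂ _ (StarAlgebra.subset_adjoin ℂ _ ha)
  have := A.isSemisimpleModule
  have hcomm : ∀ (φ : End A E) (x : E), g (φ x) = φ (g x) := fun φ x => by
    have hφ : φ.restrictScalars ℂ ∈ centralizer ℂ (A : Set (E →ₗ[ℂ] E)) :=
      (mem_centralizer_iff ℂ).mpr fun a ha => ⟨LinearMap.ext fun y => (φ.map_smul ⟨a, ha⟩ y).symm,
        LinearMap.ext fun y => (φ.map_smul ⟨star a, star_mem ha⟩ y).symm⟩
    exact (LinearMap.congr_fun ((mem_centralizer_iff ℂ).mp hg _ hφ).1 x).symm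
  let b := finBasis ℂ E
  obtain ⟨r, hr⟩ := jacobson_density ⟨⟨g, g.map_add⟩, hcomm⟩ (Finset.univ.image b)
  convert r.2
  exact b.ext fun i => hr _ (Finset.mem_image_of_mem b (Finset.mem_univ i))

variable {A}

theorem IsInvariant.orthogonal {V : Submodule ℂ E} (hV : A.IsInvariant V) :
    A.IsInvariant Vᗮ := fun a ha =>
  End.mem_invtSubmodule_adjoint_iff.mp <| by
    rw [← LinearMap.star_eq_adjoint]; exact hV _ (star_mem ha)

theorem IsInvariant.inf {V W : Submodule ℂ E} (hV : A.IsInvariant V) (hW : A.IsInvariant W) :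
    A.IsInvariant (V ⊓ W) := fun a ha => End.invtSubmodule.inf_mem (hV a ha) (hW a ha)

theorem isInvariant_ker {c : E →ₗ[ℂ] E} (hc : c ∈ A.commutant) :
    A.IsInvariant (LinearMap.ker c) := fun a ha x hx => by
  simp only [Submodule.mem_comap, LinearMap.mem_ker] at hx ⊢
  rw [← Module.End.mul_apply, ← ((mem_centralizer_iff ℂ).mp hc a ha).1, Module.End.mul_apply, hx,
    map_zero]

theorem IsInvariant.starProjection_mem_commutant {V : Submodule ℂ E} (hV : A.IsInvariant V) :
    P[V] ∈ A.commutant := by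
  have key : ∀ b ∈ A, P[V] * b * P[V] = b * P[V] := fun b hb => LinearMap.ext fun x =>
    Submodule.starProjection_eq_self_iff.mpr (hV b hb (V.starProjection_apply_mem x) :)
  -- `key` for `a⋆`, after taking adjoints, reads `P a P = P a`
  have hcomm : ∀ a ∈ A, a * P[V] = P[V] * a := fun a ha => by
    have h := congrArg star (key _ (star_mem ha))
    simp only [star_mul, star_star, V.star_coe_starProjection, ← mul_assoc] at h
    rw [← key a ha, h]
  exact (mem_centralizer_iff ℂ).mpr fun a ha => ⟨hcomm a ha, hcomm _ (star_mem ha)⟩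

theorem exists_isMinimalInvariant_le {W : Submodule ℂ E} (hW : A.IsInvariant W) (hne : W ≠ ⊥) :
    ∃ V ≤ W, A.IsMinimalInvariant V := by
  obtain ⟨V, ⟨hVW, hV, hV0⟩, hmin⟩ := wellFounded_lt.has_min
    {V : Submodule ℂ E | V ≤ W ∧ A.IsInvariant V ∧ V ≠ ⊥} ⟨W, le_rfl, hW, hne⟩
  refine ⟨V, hVW, hV, hV0, fun U hUV hU => or_iff_not_imp_left.mpr fun hU0 => ?_⟩
  exact hUV.eq_of_not_lt (hmin U ⟨hUV.trans hVW, hU, hU0⟩)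

theorem exists_orthogonal_decomposition : ∃ s : Finset (Submodule ℂ E),
    (∀ V ∈ s, A.IsMinimalInvariant V) ∧ (s : Set (Submodule ℂ E)).Pairwise (· ⟂ ·) ∧
      sSup (s : Set (Submodule ℂ E)) = ⊤ := by
  suffices h : ∀ W, A.IsInvariant W → ∃ s : Finset (Submodule ℂ E),
      (∀ V ∈ s, A.IsMinimalInvariant V ∧ V ≤ W) ∧ (s : Set (Submodule ℂ E)).Pairwise (· ⟂ ·) ∧
        sSup (s : Set (Submodule ℂ E)) = W from
    (h ⊤ fun _ _ => End.invtSubmodule.top_mem _).imp fun s hs =>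
      ⟨fun V hV => (hs.1 V hV).1, hs.2⟩
  intro W
  induction W using WellFoundedLT.induction with
  | _ W ih =>
  intro hW
  by_cases hW0 : W = ⊥
  · exact ⟨∅, by simp, by simp, by simp [hW0]⟩
  obtain ⟨V, hVW, hV⟩ := exists_isMinimalInvariant_le hW hW0
  have hlt : Vᗮ ⊓ W < W := inf_le_right.lt_of_ne fun h =>
    hV.2.1 ((V.orthogonal_disjoint).eq_bot_of_le (hVW.trans (h ▸ inf_le_left)))
  obtain ⟨s, hs, hpw, hsup⟩ := ih _ hlt (hV.1.orthogonal.inf hW)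
  have hVs : ∀ U ∈ s, U ⟂ V := fun U hU =>
    Submodule.isOrtho_iff_le.mpr ((hs U hU).2.trans inf_le_left)
  refine ⟨insert V s, ?_, ?_, ?_⟩
  · exact Finset.forall_mem_insert _ _ _ |>.mpr
      ⟨⟨hV, hVW⟩, fun U hU => ⟨(hs U hU).1, (hs U hU).2.trans inf_le_right⟩⟩
  · rw [Finset.coe_insert, Set.pairwise_insert]
    exact ⟨hpw, fun U hU _ => ⟨(hVs U hU).symm, hVs U hU⟩⟩
  · rw [Finset.coe_insert, sSup_insert, hsup,
      Submodule.sup_orthogonal_inf_of_hasOrthogonalProjection hVW]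

theorem IsMinimalInvariant.exists_compression_eq_smul {V : Submodule ℂ E}
    (hV : A.IsMinimalInvariant V) {c : E →ₗ[ℂ] E} (hc : c ∈ A.commutant) :
    ∃ μ : ℂ, P[V] * c * P[V] = μ • P[V] := by
  have : Nontrivial V := Submodule.nontrivial_iff_ne_bot.mpr hV.2.1
  have hcV : ∀ x ∈ V, (P[V] * c) x ∈ V := fun x _ => V.starProjection_apply_mem _
  obtain ⟨μ, hμ⟩ := End.exists_eigenvalue ((P[V] * c).restrict hcV)
  obtain ⟨v, hv⟩ := hμ.exists_hasEigenvector
  -- the `μ`-eigenspace of the compression is a nonzero invariant subspace of `V`, hence `V`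
  have hX : P[V] * c - μ • 1 ∈ A.commutant :=
    sub_mem (mul_mem hV.1.starProjection_mem_commutant hc) (SMulMemClass.smul_mem μ (one_mem _))
  have hker : V ⊓ LinearMap.ker (P[V] * c - μ • 1) = V := by
    refine (hV.2.2 _ inf_le_left (hV.1.inf (isInvariant_ker hX))).resolve_left fun h => hv.2 ?_
    have hv' : (v : E) ∈ V ⊓ LinearMap.ker (P[V] * c - μ • 1) :=
      ⟨v.2, by simpa [sub_eq_zero] using congrArg Subtype.val hv.apply_eq_smul⟩
    rw [h] at hv'
    exact Subtype.ext ((Submodule.mem_bot ℂ).mp hv')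
  refine ⟨μ, LinearMap.ext fun x => ?_⟩
  simpa [sub_eq_zero, mul_assoc] using (hker.ge (V.starProjection_apply_mem x)).2

theorem IsMinimalInvariant.exists_star_mul_mul_eq_smul {V : Submodule ℂ E}
    (hV : A.IsMinimalInvariant V) {u u' c : E →ₗ[ℂ] E} (hu : u ∈ A.commutant)
    (hu' : u' ∈ A.commutant) (hc : c ∈ A.commutant) (h₁ : star u * u = P[V])
    (h₁' : star u' * u' = P[V]) : ∃ μ : ℂ, ∀ x ∈ V, star u' (c (u x)) = μ • x := by
  obtain ⟨μ, hμ⟩ := hV.exists_compression_eq_smul (mul_mem (mul_mem (star_mem hu') hc) hu)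
  refine ⟨μ, fun x hx => ?_⟩
  calc star u' (c (u x))
      = (P[V] * star u' * c * (u * P[V])) x := by
        rw [u'.starProjection_mul_star_eq_self h₁', u.mul_starProjection_eq_self h₁]
        rfl
    _ = (P[V] * (star u' * c * u) * P[V]) x := by simp only [mul_assoc]
    _ = μ • x := by
        rw [hμ, LinearMap.smul_apply, ContinuousLinearMap.coe_coe,
          Submodule.starProjection_eq_self_iff.mpr hx]

theorem IsMinimalInvariant.mvnEquiv_of_mul_mul_ne_zero {V W : Submodule ℂ E}
    (hV : A.IsMinimalInvariant V) (hW : A.IsMinimalInvariant W) {c : E →ₗ[ℂ] E}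
    (hc : c ∈ A.commutant) (hne : P[W] * c * P[V] ≠ 0) : A.commutant.MvNEquiv P[V] P[W] := by
  set t := P[W] * c * P[V] with ht_def
  have ht : t ∈ A.commutant :=
    mul_mem (mul_mem hW.1.starProjection_mem_commutant hc) hV.1.starProjection_mem_commutant
  have htV : t * P[V] = t := by rw [ht_def, mul_assoc, V.coe_starProjection_mul_self]
  have hWt : P[W] * t = t := by
    rw [ht_def, ← mul_assoc, ← mul_assoc, W.coe_starProjection_mul_self]
  have hVt : P[V] * star t = star t := by rw [← V.star_coe_starProjection, ← star_mul, htV]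
  have htW : star t * P[W] = star t := by rw [← W.star_coe_starProjection, ← star_mul, hWt]
  -- by Schur, `t⋆t` and `tt⋆` are multiples of `P[V]` and `P[W]`
  obtain ⟨l, hl⟩ := hV.exists_compression_eq_smul (mul_mem (star_mem ht) ht)
  obtain ⟨m, hm⟩ := hW.exists_compression_eq_smul (mul_mem ht (star_mem ht))
  rw [← mul_assoc, hVt, mul_assoc, htV] at hl
  rw [← mul_assoc, hWt, mul_assoc, htW] at hm
  have hlm : l = m := smul_left_injective ℂ hne <| calc
    l • t = t * (l • P[V]) := by rw [mul_smul_comm, htV]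
    _ = m • t := by rw [← hl, ← mul_assoc, hm, smul_mul_assoc, hWt]
  -- `l = ‖t x‖² / ‖x‖²` for any `x ∈ V` with `t x ≠ 0`
  obtain ⟨y, hy⟩ : ∃ y, t y ≠ 0 := by
    by_contra! h
    exact hne (LinearMap.ext h)
  set x := V.starProjection y
  have htx : t x = t y := LinearMap.congr_fun htV y
  have hPx : V.starProjection x = x :=
    Submodule.starProjection_eq_self_iff.mpr (V.starProjection_apply_mem y)
  have hx : (‖x‖ : ℂ) ≠ 0 := by
    simpa using fun h : x = 0 => hy (by rw [← htx, h, map_zero])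
  have htx' : (‖t x‖ : ℂ) ≠ 0 := by simpa [htx] using hy
  have hnorm : l * (‖x‖ : ℂ) ^ 2 = (‖t x‖ : ℂ) ^ 2 := by
    have h := congrArg (⟪x, · x⟫_ℂ) hl
    simp only [LinearMap.star_eq_adjoint, Module.End.mul_apply, LinearMap.adjoint_inner_right,
      LinearMap.smul_apply, ContinuousLinearMap.coe_coe, inner_smul_right, hPx,
      inner_self_eq_norm_sq_to_K] at h
    exact h.symm
  have hlr : l = ((‖t x‖ / ‖x‖ : ℝ) : ℂ) ^ 2 := by
    push_cast
    field_simp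
    exact hnorm
  refine .of_star_mul_self_eq_smul ht (div_ne_zero (by simpa using htx') (by simpa using hx))
    (hlr ▸ hl) (hlr ▸ hlm ▸ hm)

theorem exists_isotypic_decomposition :
    ∃ (n : ℕ) (dR : Fin n → ℕ) (W : (Σ k : Fin n, Fin (dR k)) → Submodule ℂ E),
      (∀ t, A.IsMinimalInvariant (W t)) ∧
      OrthogonalFamily ℂ (fun t => W t) (fun t => (W t).subtypeₗᵢ) ∧ iSup W = ⊤ ∧
      (∀ k, 0 < dR k) ∧ (∀ t t', t.1 = t'.1 → A.commutant.MvNEquiv P[W t] P[W t']) ∧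
      ∀ t t', t.1 ≠ t'.1 → ∀ c ∈ A.commutant, P[W t'] * c * P[W t] = 0 := by
  obtain ⟨s, hmin, hortho, hsup⟩ := A.exists_orthogonal_decomposition
  let r : Setoid s :=
    { r := fun V V' => A.commutant.MvNEquiv P[V.1] P[V'.1]
      iseqv := ⟨fun V => .refl V.1.isStarProjection_coe_starProjection
          (hmin V.1 V.2).1.starProjection_mem_commutant, .symm,
        .trans (Submodule.isStarProjection_coe_starProjection _).isIdempotentElem
          (Submodule.isStarProjection_coe_starProjection _).isIdempotentElem⟩ }
  obtain ⟨n, dR, e, hpos, he⟩ := r.exists_sigma_fin_equiv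
  refine ⟨n, dR, fun t => (e t).1, fun t => hmin _ (e t).2, ?_, ?_, hpos,
    fun t t' h => (he t t').mpr h, fun t t' h c hc => ?_⟩
  · exact orthogonalFamily_iff_pairwise.mpr fun t t' htt' =>
      hortho (e t).2 (e t').2 fun h => htt' (e.injective (Subtype.ext h))
  · rw [e.iSup_comp (g := fun V : s => V.1), ← hsup, sSup_eq_iSup']
    rfl
  · by_contra hne
    exact h ((he t t').mp ((hmin _ (e t).2).mvnEquiv_of_mul_mul_ne_zero (hmin _ (e t').2) hc hne))

section IsotypicBasis

variable {ι : Type*} {L R : ι → Type*} [∀ k, Fintype (L k)]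
  {M : ι → Submodule ℂ E} {u : (Σ k, R k) → E →ₗ[ℂ] E} {f : ∀ k, OrthonormalBasis (L k) ℂ (M k)}
  {b : (Σ k, L k × R k) → E}

theorem actsAsLeftBlocks_of_mem (hM : ∀ k, A.IsInvariant (M k)) (hu : ∀ t, u t ∈ A.commutant)
    (hb : ∀ k q j, b ⟨k, q, j⟩ = u ⟨k, j⟩ (f k q)) {a : E →ₗ[ℂ] E} (ha : a ∈ A) :
    ActsAsLeftBlocks b a fun k p q => ⟪(f k p : E), a (f k q)⟫_ℂ := fun k q j => by
  have hexp := congrArg Subtype.val ((f k).sum_repr' ⟨a (f k q), hM k a ha (f k q).2⟩)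
  simp only [Submodule.coe_sum, Submodule.coe_smul, Submodule.coe_inner] at hexp
  rw [hb, ← Module.End.mul_apply, ((mem_centralizer_iff ℂ).mp (hu _) a ha).1, Module.End.mul_apply,
    ← hexp, map_sum]
  simp only [map_smul, hb]

theorem exists_actsAsRightBlocks_of_mem [Fintype ι] [∀ k, Fintype (R k)]
    {W : (Σ k, R k) → Submodule ℂ E}
    (hW : OrthogonalFamily ℂ (fun t => W t) fun t => (W t).subtypeₗᵢ) (hsup : iSup W = ⊤)
    (hdiff : ∀ t t', t.1 ≠ t'.1 → ∀ c ∈ A.commutant, P[W t'] * c * P[W t] = 0)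
    (hM : ∀ k, A.IsMinimalInvariant (M k)) (hu : ∀ t, u t ∈ A.commutant)
    (h₁ : ∀ t, star (u t) * u t = P[M t.1]) (h₂ : ∀ t, u t * star (u t) = P[W t])
    (hb : ∀ k q j, b ⟨k, q, j⟩ = u ⟨k, j⟩ (f k q)) {c : E →ₗ[ℂ] E} (hc : c ∈ A.commutant) :
    ∃ S, ActsAsRightBlocks b c S := by
  -- the compressions `u'⋆ c u` vanish between distinct classes and are scalars within a class
  have hvanish : ∀ t t', t.1 ≠ t'.1 → star (u t') * c * u t = 0 := fun t t' h => calc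
    star (u t') * c * u t = star (u t') * P[W t'] * c * (P[W t] * u t) := by
        rw [(u t').star_mul_starProjection_eq_self (h₁ t') (h₂ t'),
          (u t).starProjection_mul_eq_self (h₁ t) (h₂ t)]
    _ = star (u t') * (P[W t'] * c * P[W t]) * u t := by simp only [mul_assoc]
    _ = 0 := by rw [hdiff t t' h c hc, mul_zero, zero_mul]
  choose S hS using fun k (j' j : R k) => (hM k).exists_star_mul_mul_eq_smul (hu ⟨k, j⟩)
    (hu ⟨k, j'⟩) hc (h₁ ⟨k, j⟩) (h₁ ⟨k, j'⟩)
  refine ⟨S, fun k q j => ?_⟩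
  calc c (b ⟨k, q, j⟩)
      = ∑ t, P[W t] (c (b ⟨k, q, j⟩)) :=
        (hW.sum_projection_of_mem_iSup _ (hsup ▸ Submodule.mem_top)).symm
    _ = ∑ k', ∑ j', u ⟨k', j'⟩ (star (u ⟨k', j'⟩) (c (u ⟨k, j⟩ (f k q)))) := by
        rw [← Finset.univ_sigma_univ, Finset.sum_sigma]
        simp only [← h₂, hb, Module.End.mul_apply]
    _ = ∑ j', u ⟨k, j'⟩ (star (u ⟨k, j'⟩) (c (u ⟨k, j⟩ (f k q)))) := by
        refine Finset.sum_eq_single k (fun k' _ hk' => Finset.sum_eq_zero fun j' _ => ?_) (by simp)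
        have h := LinearMap.congr_fun (hvanish ⟨k, j⟩ ⟨k', j'⟩ (Ne.symm hk')) (f k q)
        simp only [Module.End.mul_apply, LinearMap.zero_apply] at h
        rw [h, map_zero]
    _ = ∑ j', S k j' j • b ⟨k, q, j'⟩ := by simp only [hS k _ j _ (f k q).2, map_smul, hb]

end IsotypicBasis

theorem exists_orthonormalBasis_actsAsBlocks :
    ∃ (n : ℕ) (dL dR : Fin n → ℕ) (b : OrthonormalBasis (Σ k : Fin n, Fin (dL k) × Fin (dR k)) ℂ E),
      (∀ a ∈ A, ∃ T, ActsAsLeftBlocks b a T) ∧ ∀ c ∈ A.commutant, ∃ S, ActsAsRightBlocks b c S := by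
  obtain ⟨n, dR, W, hmin, hW, hsup, hpos, hsame, hdiff⟩ := A.exists_isotypic_decomposition
  -- `M k` models the `k`-th class; `u t` is a partial isometry in `A'` from `M t.1` onto `W t`
  let M : Fin n → Submodule ℂ E := fun k => W ⟨k, ⟨0, hpos k⟩⟩
  let f : ∀ k, OrthonormalBasis (Fin (finrank ℂ (M k))) ℂ (M k) := fun k => stdOrthonormalBasis ℂ _
  choose u hu h₁ h₂ using fun t : Σ k, Fin (dR k) => hsame ⟨t.1, ⟨0, hpos t.1⟩⟩ t rfl
  obtain ⟨b, hb⟩ := OrthonormalBasis.exists_sigma_map_partialIsometry (M := M) hW hsup h₁ h₂ f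
  exact ⟨n, fun k => finrank ℂ (M k), dR, b,
    fun a ha => ⟨_, actsAsLeftBlocks_of_mem (M := M) (fun k => (hmin _).1) hu hb ha⟩,
    fun c hc =>
      exists_actsAsRightBlocks_of_mem (M := M) hW hsup hdiff (fun k => hmin _) hu h₁ h₂ hb hc⟩

end StarSubalgebra

end Operators

theorem artin_wedderburn_vonNeumann
    {E : Type*} [NormedAddCommGroup E] [InnerProductSpace ℂ E] [FiniteDimensional ℂ E]
    (A : StarSubalgebra ℂ (E →ₗ[ℂ] E)) :
    ∃ (n : ℕ) (dL dR : Fin n → ℕ)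
      (U : E ≃ₗᵢ[ℂ] EuclideanSpace ℂ (Σ k : Fin n, Fin (dL k) × Fin (dR k))),
      ∀ f : EuclideanSpace ℂ (Σ k : Fin n, Fin (dL k) × Fin (dR k)) →ₗ[ℂ]
          EuclideanSpace ℂ (Σ k : Fin n, Fin (dL k) × Fin (dR k)),
        ((∃ M ∈ A, ∀ x : E, f (U x) = U (M x)) ↔
          ∃ T : ∀ k : Fin n, Matrix (Fin (dL k)) (Fin (dL k)) ℂ,
            ∀ (x : EuclideanSpace ℂ (Σ k : Fin n, Fin (dL k) × Fin (dR k)))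
              (i : Σ k : Fin n, Fin (dL k) × Fin (dR k)),
              f x i = ∑ a : Fin (dL i.1), T i.1 i.2.1 a * x ⟨i.1, a, i.2.2⟩) := by
  obtain ⟨n, dL, dR, b, hA, hA'⟩ := A.exists_orthonormalBasis_actsAsBlocks
  set U := b.repr.toLinearEquiv
  have hUb : ⇑U ∘ ⇑b = fun s => EuclideanSpace.single s 1 := funext b.repr_self
  refine ⟨n, dL, dR, b.repr, fun f => ?_⟩
  simp_rw [← actsAsLeftBlocks_single_iff, ← hUb]
  constructor
  · rintro ⟨M, hM, hfM⟩
    obtain ⟨T, hT⟩ := hA M hM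
    have hf : f = U.conj M := LinearMap.ext fun y => by simpa [U] using hfM (b.repr.symm y)
    exact ⟨T, hf ▸ (actsAsLeftBlocks_conj_iff U b).mpr hT⟩
  · rintro ⟨T, hT⟩
    have hf : U.conj (U.symm.conj f) = f := LinearMap.ext fun y => by simp
    rw [← hf, actsAsLeftBlocks_conj_iff, ← b.coe_toBasis] at hT
    refine ⟨U.symm.conj f, ?_, fun x => by simp [U]⟩
    rw [← A.centralizer_centralizer_eq_self, StarSubalgebra.mem_centralizer_iff]
    intro c hc
    obtain ⟨S, hS⟩ := hA' c hc
    obtain ⟨S', hS'⟩ := hA' (star c) (star_mem hc)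
    rw [← b.coe_toBasis] at hS hS'
    exact ⟨(hT.commute hS).eq.symm, (hT.commute hS').eq.symm⟩
end

section
/- Let A be a unital *-subalgebra of L(H), {P_i} a maximal family of nonzero pairwise orthogonal self-adjoint projectors summing to 1, and ∼ the relation i ∼ j iff P_i A P_j ≠ 0, with equivalence classes I_1,...,I_n. Set P_{I_k} = Σ_{i∈I_k} P_i. Then A = ⊕_{k=1}^n P_{I_k} A P_{I_k} as an internal direct sum, and each P_{I_k} is a central projection of A. -/
open scoped BigOperators

theorem central_decomposition
    {E : Type*} [NormedAddCommGroup E] [InnerProductSpace ℂ E] [FiniteDimensional ℂ E]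
    (A : StarSubalgebra ℂ (E →ₗ[ℂ] E)) {p n : ℕ} (P : Fin p → (E →ₗ[ℂ] E))
    (hP : IsMaximalOrthProjFamily A P) (hsum : ∑ i, P i = 1)
    (I : Fin p → Fin n) (hsurj : Function.Surjective I)
    (hclass : ∀ i j, I i = I j ↔ ∃ M ∈ A, P i * M * P j ≠ 0) :
    (∀ k, (∑ i ∈ Finset.univ.filter (fun i => I i = k), P i) ∈ A ∧
        ∀ M ∈ A, (∑ i ∈ Finset.univ.filter (fun i => I i = k), P i) * M
          = M * (∑ i ∈ Finset.univ.filter (fun i => I i = k), P i)) ∧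
      (∀ M ∈ A, M = ∑ k : Fin n,
        (∑ i ∈ Finset.univ.filter (fun i => I i = k), P i) * M *
          (∑ i ∈ Finset.univ.filter (fun i => I i = k), P i)) ∧
      ∀ f : Fin n → (E →ₗ[ℂ] E),
        (∀ k, f k ∈ A ∧
          (∑ i ∈ Finset.univ.filter (fun i => I i = k), P i) * f k *
            (∑ i ∈ Finset.univ.filter (fun i => I i = k), P i) = f k) →
        ∑ k, f k = 0 → ∀ k, f k = 0 := by
  obtain ⟨⟨hmem, -, -, horth⟩, -⟩ := hP
  set Q : Fin n → (E →ₗ[ℂ] E) :=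
    fun k => ∑ i ∈ Finset.univ.filter (fun i => I i = k), P i with hQ
  have hzero : ∀ i j, I i ≠ I j → ∀ M ∈ A, P i * M * P j = 0 := by
    intro i j hij M hM
    by_contra h
    exact hij ((hclass i j).2 ⟨M, hM, h⟩)
  have hQmem : ∀ k, Q k ∈ A := fun k => sum_mem (fun i _ => hmem i)
  have hQQ : ∀ k l, Q k * Q l = if k = l then Q k else 0 := by
    intro k l
    have step : Q k * Q l = ∑ i ∈ Finset.univ.filter (fun i => I i = l),
        (if i ∈ Finset.univ.filter (fun i => I i = k) then P i else 0) := by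
      simp only [hQ, Finset.sum_mul, Finset.mul_sum, horth]
      exact Finset.sum_congr rfl fun i _ => Finset.sum_ite_eq' _ _ _
    rw [step]
    by_cases hkl : k = l
    · subst hkl
      rw [if_pos rfl, hQ]
      exact Finset.sum_congr rfl fun i hi => if_pos hi
    · rw [if_neg hkl]
      refine Finset.sum_eq_zero fun i hi => if_neg ?_
      simp only [Finset.mem_filter] at hi ⊢
      intro h
      exact hkl (hi.2 ▸ h.2 ▸ rfl)
  have hQsum : ∑ k, Q k = 1 := by
    rw [hQ, ← hsum]
    exact Finset.sum_fiberwise _ _ _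
  have hQMQ : ∀ M ∈ A, ∀ k l, k ≠ l → Q k * M * Q l = 0 := by
    intro M hM k l hkl
    simp only [hQ, Finset.sum_mul, Finset.mul_sum]
    refine Finset.sum_eq_zero fun i hi => Finset.sum_eq_zero fun j hj => ?_
    simp only [Finset.mem_filter] at hi hj
    apply hzero _ _ _ M hM
    intro h
    first
    | exact hkl ((hi.2.symm.trans h).trans hj.2)
    | exact hkl ((hj.2.symm.trans h).trans hi.2)
    | exact hkl ((hi.2.symm.trans h.symm).trans hj.2)
    | exact hkl ((hj.2.symm.trans h.symm).trans hi.2)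
  have h1 : ∀ k, ∀ M ∈ A, Q k * M = Q k * M * Q k := by
    intro k M hM
    calc Q k * M = Q k * M * ∑ l, Q l := by rw [hQsum, mul_one]
      _ = ∑ l, Q k * M * Q l := Finset.mul_sum _ _ _
      _ = Q k * M * Q k := by
          rw [Finset.sum_eq_single k (fun l _ hlk => hQMQ M hM k l (Ne.symm hlk))
            (by simp)]
  have h2 : ∀ k, ∀ M ∈ A, M * Q k = Q k * M * Q k := by
    intro k M hM
    calc M * Q k = (∑ l, Q l) * M * Q k := by rw [hQsum, one_mul]
      _ = ∑ l, Q l * M * Q k := by rw [Finset.sum_mul, Finset.sum_mul]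
      _ = Q k * M * Q k := by
          rw [Finset.sum_eq_single k (fun l _ hlk => hQMQ M hM l k hlk) (by simp)]
  have hcentral : ∀ k, ∀ M ∈ A, Q k * M = M * Q k := by
    intro k M hM
    rw [h1 k M hM, h2 k M hM]
  refine ⟨fun k => ⟨hQmem k, hcentral k⟩, ?_, ?_⟩
  · intro M hM
    calc M = (∑ k, Q k) * M := by rw [hQsum, one_mul]
      _ = ∑ k, Q k * M := Finset.sum_mul _ _ _
      _ = ∑ k, Q k * M * Q k := Finset.sum_congr rfl fun k _ => h1 k M hM
  · intro f hf hsum0 k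
    have hfQ : ∀ l, Q l * f l * Q l = f l := fun l => (hf l).2
    have key : ∀ l, l ≠ k → Q k * f l * Q k = 0 := by
      intro l hlk
      rw [← hfQ l, ← mul_assoc, ← mul_assoc, hQQ k l, if_neg (fun h => hlk h.symm)]
      simp
    have e1 : Q k * (∑ l, f l) = ∑ l, Q k * f l := Finset.mul_sum _ _ _
    have e2 : (∑ l, Q k * f l) * Q k = ∑ l, Q k * f l * Q k := Finset.sum_mul _ _ _
    have hmain : Q k * (∑ l, f l) * Q k = f k := by
      rw [e1, e2, Finset.sum_eq_single k (fun l _ hlk => key l hlk) (by simp)]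
      exact hfQ k
    rw [hsum0] at hmain
    simpa using hmain.symm
end

section
/- Let A ⊆ L(H) be a unital *-subalgebra of the operators on a finite-dimensional complex Hilbert space, and suppose A has trivial center (its center is ℂ·1). Then there exist finite-dimensional Hilbert spaces H_L, H_R and a unitary U : H → H_L ⊗ H_R such that U A U† = L(H_L) ⊗ 1_{H_R}. -/
/-!
Write `1 = ∑ pᵢ` as a sum of pairwise orthogonal minimal projections of `A`, i.e. nonzero
projections with `pᵢ A pᵢ = ℂ pᵢ`: a projection of `A` with minimal range has this property,
because every spectral projection of a self-adjoint element of `q A q` is a polynomial in it and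
hence again lies in `A`. The sum of those `p_k` with `p_k A p₀ ≠ 0` commutes with `A`, since `A`
is block diagonal with respect to it; trivial center forces it to be `1`. Hence every `pᵢ` is
equivalent to `p₀` through a partial isometry `vᵢ ∈ A`, and the `vⱼ vₖ*` are matrix units
spanning `A`. If `f_b` is an orthonormal basis of the range of `p₀`, the vectors `vᵢ f_b` form an
orthonormal basis of `E` in whose coordinates `vⱼ vₖ*` acts as `E_{jk} ⊗ 1`.
-/

namespace ArtinWedderburn

open LinearMap Polynomial
open scoped ComplexStarModule

theorem _root_.IsSelfAdjoint.mul_eq_right_iff_mul_eq_left {R : Type*} [Mul R] [StarMul R]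
    {p t : R} (hp : IsSelfAdjoint p) (ht : IsSelfAdjoint t) : p * t = t ↔ t * p = t := by
  constructor <;> intro h <;> simpa only [star_mul, hp.star_eq, ht.star_eq] using congrArg star h

theorem range_le_of_mul_eq {R M : Type*} [Semiring R] [AddCommMonoid M] [Module R M]
    {p t : Module.End R M} (h : p * t = t) : range t ≤ range p :=
  h ▸ range_comp_le_range t p

theorem commute_of_mul_mul_eq_zero {R : Type*} [Ring R] {e f a : R} (hef : e + f = 1)
    (h₁ : e * a * f = 0) (h₂ : f * a * e = 0) : Commute e a :=
  calc e * a = e * a * (e + f) := by rw [hef, mul_one]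
    _ = (e + f) * a * e := by rw [mul_add, add_mul, add_mul, h₁, h₂]
    _ = a * e := by rw [hef, one_mul]

variable {E : Type*} [NormedAddCommGroup E] [InnerProductSpace ℂ E] [FiniteDimensional ℂ E]

local notation "L" => E →ₗ[ℂ] E

theorem eq_zero_of_star_mul_self_eq_zero {x : L} (h : star x * x = 0) : x = 0 := by
  rw [← ker_eq_top, ← ker_adjoint_comp_self, ← star_eq_adjoint, ← Module.End.mul_eq_comp, h,
    ker_zero]

theorem mul_eq_self_of_star_mul_self_eq {v q : L} (hq : IsStarProjection q) (hv : star v * v = q) :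
    v * q = v := by
  have hq2 : q * q = q := hq.isIdempotentElem.eq
  have hqs : star q = q := hq.isSelfAdjoint.star_eq
  refine (sub_eq_zero.mp (eq_zero_of_star_mul_self_eq_zero ?_)).symm
  calc star (v - v * q) * (v - v * q)
      = star v * v - star v * v * q - q * (star v * v) + q * (star v * v) * q := by
        rw [star_sub, star_mul, hqs]; noncomm_ring
    _ = 0 := by simp only [hv, hq2]; abel

theorem mul_star_eq_star_of_star_mul_self_eq {v q : L} (hq : IsStarProjection q)
    (hv : star v * v = q) : q * star v = star v := by
  simpa only [star_mul, hq.isSelfAdjoint.star_eq] using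
    congrArg star (mul_eq_self_of_star_mul_self_eq hq hv)

theorem isSelfAdjoint_of_apply_eq_smul {ι : Type*} [Fintype ι] (β : OrthonormalBasis ι ℂ E)
    {T : L} (c : ι → ℝ) (h : ∀ i, T (β i) = (c i : ℂ) • β i) : IsSelfAdjoint T := by
  rw [isSelfAdjoint_iff', eq_comm, eq_adjoint_iff_basis β.toBasis β.toBasis]
  intro i j
  simp only [OrthonormalBasis.coe_toBasis, h, inner_smul_left, inner_smul_right]
  rcases eq_or_ne i j with rfl | hij
  · simp
  · simp [β.orthonormal.2 hij]

theorem _root_.IsSelfAdjoint.exists_eigenprojection {b : L} (hb : IsSelfAdjoint b) (hb0 : b ≠ 0) :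
    ∃ Q : ℂ[X], IsStarProjection (aeval b Q) ∧ aeval b Q ≠ 0 ∧
      ∃ μ : ℂ, μ ≠ 0 ∧ b * aeval b Q = μ • aeval b Q := by
  classical
  have hsym : b.IsSymmetric := b.isSymmetric_iff_isSelfAdjoint.mpr hb
  set β := hsym.eigenvectorBasis rfl
  set ε : Fin _ → ℂ := fun i => (hsym.eigenvalues rfl i : ℂ)
  have hbβ : ∀ i, b (β i) = ε i • β i := hsym.apply_eigenvectorBasis rfl
  have hext : ∀ {S T : L}, (∀ i, S (β i) = T (β i)) → S = T := fun h =>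
    β.toBasis.ext fun i => by simpa using h i
  obtain ⟨j, hj⟩ : ∃ j, ε j ≠ 0 := by
    by_contra! h
    exact hb0 (hext fun i => by simp [hbβ, h])
  set s := Finset.univ.image ε
  set Q := Lagrange.basis s id (ε j)
  set χ : Fin _ → ℝ := fun i => if ε i = ε j then 1 else 0
  have hQε : ∀ i, Q.eval (ε i) = χ i := by
    intro i
    have hi : ε i ∈ s := Finset.mem_image_of_mem ε (Finset.mem_univ i)
    by_cases h : ε i = ε j
    · simp only [χ, h, if_true, Complex.ofReal_one]
      exact Lagrange.eval_basis_self (v := _root_.id) (Set.injOn_id _) (h ▸ hi : ε j ∈ s)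
    · simp only [χ, h, if_false, Complex.ofReal_zero]
      exact Lagrange.eval_basis_of_ne (v := _root_.id) (Ne.symm h) hi
  have hQβ : ∀ i, aeval b Q (β i) = (χ i : ℂ) • β i := fun i =>
    (Module.End.aeval_apply_of_hasEigenvector (hsym.hasEigenvector_eigenvectorBasis rfl i)).trans
      (congrArg (· • β i) (hQε i))
  have hχ : ∀ i, (χ i : ℂ) * χ i = χ i := fun i => by by_cases h : ε i = ε j <;> simp [χ, h]
  refine ⟨Q, ⟨?_, isSelfAdjoint_of_apply_eq_smul β χ hQβ⟩, ?_, ε j, hj, ?_⟩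
  · exact hext fun i => by rw [Module.End.mul_apply, hQβ, map_smul, hQβ, smul_smul, hχ]
  · exact fun h0 => β.orthonormal.ne_zero j (by simpa [χ, h0] using (hQβ j).symm)
  · refine hext fun i => ?_
    by_cases h : ε i = ε j <;> simp [hQβ, hbβ, χ, h]

theorem aeval_mem {A : StarSubalgebra ℂ L} {b : L} (hb : b ∈ A) (Q : ℂ[X]) : aeval b Q ∈ A :=
  Algebra.adjoin_le (S := A.toSubalgebra) (Set.singleton_subset_iff.mpr hb)
    (aeval_mem_adjoin_singleton ℂ b)

structure IsMinimalProjection (A : StarSubalgebra ℂ L) (q : L) : Prop where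
  mem : q ∈ A
  isStarProjection : IsStarProjection q
  ne_zero : q ≠ 0
  exists_mul_mul_eq_smul : ∀ a ∈ A, ∃ c : ℂ, q * a * q = c • q

variable {A : StarSubalgebra ℂ (E →ₗ[ℂ] E)}

theorem exists_eq_smul_of_isSelfAdjoint {q b : L} (hq : IsStarProjection q)
    (hmin : ∀ t ∈ A, IsStarProjection t → t ≠ 0 → q * t = t → t = q)
    (hbA : b ∈ A) (hb : IsSelfAdjoint b) (hbq : q * b * q = b) : ∃ c : ℂ, b = c • q := by
  by_cases hb0 : b = 0
  · exact ⟨0, by rw [hb0, zero_smul]⟩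
  obtain ⟨Q, hP, hP0, μ, hμ, hbP⟩ := hb.exists_eigenprojection hb0
  have hq2 : q * q = q := hq.isIdempotentElem.eq
  have hP_eq : aeval b Q = μ⁻¹ • (b * aeval b Q) := by
    rw [hbP, smul_smul, inv_mul_cancel₀ hμ, one_smul]
  have hPq : aeval b Q = q := by
    refine hmin _ (aeval_mem hbA Q) hP hP0 ?_
    rw [hP_eq, mul_smul_comm, ← hbq, ← mul_assoc, ← mul_assoc, ← mul_assoc, hq2]
  refine ⟨μ, ?_⟩
  have hbq' : b * q = b := by rw [← hbq, mul_assoc (q * b), hq2]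
  rw [← hbq', ← hPq, hbP]

theorem isMinimalProjection_of_forall {q : L} (hqA : q ∈ A) (hq : IsStarProjection q)
    (hq0 : q ≠ 0) (hmin : ∀ t ∈ A, IsStarProjection t → t ≠ 0 → q * t = t → t = q) :
    IsMinimalProjection A q := by
  refine ⟨hqA, hq, hq0, fun a ha => ?_⟩
  have hcompress : ∀ y : L, q * (q * y * q) * q = q * y * q := fun y => by
    rw [← mul_assoc, ← mul_assoc, hq.isIdempotentElem.eq, mul_assoc, hq.isIdempotentElem.eq]
  set x := q * a * q
  have hxA : x ∈ A := mul_mem (mul_mem hqA ha) hqA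
  have hstar : star x = q * star a * q := by
    rw [star_mul, star_mul, hq.isSelfAdjoint.star_eq, mul_assoc]
  have hre : q * (ℜ x : L) * q = ℜ x := by
    rw [realPart_apply_coe, mul_smul_comm, smul_mul_assoc, hstar, mul_add, add_mul,
      hcompress, hcompress]
  have him : q * (ℑ x : L) * q = ℑ x := by
    rw [imaginaryPart_apply_coe, mul_smul_comm, smul_mul_assoc, mul_smul_comm, smul_mul_assoc,
      hstar, mul_sub, sub_mul, hcompress, hcompress]
  have hreA : (ℜ x : L) ∈ A := by
    rw [realPart_apply_coe]
    exact A.smul_mem (add_mem hxA (star_mem hxA)) _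
  have himA : (ℑ x : L) ∈ A := by
    rw [imaginaryPart_apply_coe]
    exact A.smul_mem (A.smul_mem (sub_mem hxA (star_mem hxA)) _) _
  obtain ⟨c₁, h₁⟩ := exists_eq_smul_of_isSelfAdjoint hq hmin hreA (ℜ x).prop hre
  obtain ⟨c₂, h₂⟩ := exists_eq_smul_of_isSelfAdjoint hq hmin himA (ℑ x).prop him
  exact ⟨c₁ + Complex.I * c₂, by
    rw [← realPart_add_I_smul_imaginaryPart x, h₁, h₂, smul_smul, ← add_smul]⟩

theorem exists_isMinimalProjection_mul_eq {r : L} (hrA : r ∈ A) (hr : IsStarProjection r)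
    (hr0 : r ≠ 0) : ∃ q, IsMinimalProjection A q ∧ q * r = q := by
  set S := {t : L | t ∈ A ∧ IsStarProjection t ∧ t ≠ 0 ∧ t * r = t}
  obtain ⟨q, ⟨hqA, hq, hq0, hqr⟩, hmin⟩ := (InvImage.wf range wellFounded_lt).has_min S
    ⟨r, hrA, hr, hr0, hr.isIdempotentElem.eq⟩
  refine ⟨q, isMinimalProjection_of_forall hqA hq hq0 fun t htA ht ht0 hqt => ?_, hqr⟩
  have htq : t * q = t := (hq.isSelfAdjoint.mul_eq_right_iff_mul_eq_left ht.isSelfAdjoint).mp hqt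
  have htS : t ∈ S := ⟨htA, ht, ht0, by rw [← htq, mul_assoc, hqr]⟩
  exact LinearMap.IsStarProjection.ext ht hq ((range_le_of_mul_eq hqt).eq_of_not_lt (hmin t htS))

theorem IsMinimalProjection.exists_star_mul_self_eq_smul {p q a : L}
    (hq : IsMinimalProjection A q) (hpA : p ∈ A) (hp : IsSelfAdjoint p) (ha : a ∈ A) :
    ∃ c : ℂ, star (p * a * q) * (p * a * q) = c • q := by
  obtain ⟨c, hc⟩ :=
    hq.exists_mul_mul_eq_smul _ (mul_mem (mul_mem (star_mem ha) (mul_mem hpA hpA)) ha)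
  refine ⟨c, ?_⟩
  rw [← hc, star_mul, star_mul, hp.star_eq, hq.isStarProjection.isSelfAdjoint.star_eq]
  noncomm_ring

theorem IsMinimalProjection.mul_mul_ne_zero {p p' q a b : L} (hp' : IsMinimalProjection A p')
    (hpA : p ∈ A) (hp : IsSelfAdjoint p) (ha : a ∈ A) (hx : p * a * p' ≠ 0)
    (hy : p' * b * q ≠ 0) : p * (a * p' * b) * q ≠ 0 := by
  obtain ⟨c, hc⟩ := hp'.exists_star_mul_self_eq_smul hpA hp ha
  have hc0 : c ≠ 0 := by
    rintro rfl
    exact hx (eq_zero_of_star_mul_self_eq_zero (by rw [hc, zero_smul]))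
  have hp'2 : p' * p' = p' := hp'.isStarProjection.isIdempotentElem.eq
  have hxy : p * a * p' * (p' * b * q) = p * (a * p' * b) * q := by
    calc p * a * p' * (p' * b * q) = p * a * (p' * p') * b * q := by noncomm_ring
      _ = p * (a * p' * b) * q := by rw [hp'2]; noncomm_ring
  intro h
  have : c • (p' * b * q) = 0 :=
    calc c • (p' * b * q) = c • p' * (p' * b * q) := by
          rw [smul_mul_assoc, ← mul_assoc, ← mul_assoc, hp'2]
      _ = star (p * a * p') * (p * a * p' * (p' * b * q)) := by rw [← hc, mul_assoc]
      _ = 0 := by rw [hxy, h, mul_zero]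
  exact hy ((smul_eq_zero.mp this).resolve_left hc0)

theorem IsMinimalProjection.mul_mul_eq_zero_of_forall {p q r a : L}
    (hp : IsMinimalProjection A p) (hqA : q ∈ A) (hq : IsSelfAdjoint q)
    (hpr : ∃ b ∈ A, p * b * r ≠ 0) (hqr : ∀ b ∈ A, q * b * r = 0) (ha : a ∈ A) :
    p * a * q = 0 := by
  obtain ⟨b, hb, hpbr⟩ := hpr
  by_contra h
  have hqp : q * star a * p ≠ 0 := fun h' => h <| by
    simpa only [star_mul, star_star, star_zero, hp.isStarProjection.isSelfAdjoint.star_eq,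
      hq.star_eq, mul_assoc] using congrArg star h'
  exact hp.mul_mul_ne_zero hqA hq (star_mem ha) hqp hpbr
    (hqr _ (mul_mem (mul_mem (star_mem ha) hp.mem) hb))

/-- That is, `c` is a positive real, so that a rescaling of `x` is a partial isometry. -/
theorem exists_star_mul_self_mul_eq_one {x q : L} {c : ℂ} (hq : IsStarProjection q)
    (hxq : x * q = x) (hx : x ≠ 0) (hc : star x * x = c • q) : ∃ s : ℂ, star s * s * c = 1 := by
  obtain ⟨y, hy⟩ : ∃ y, x (q y) ≠ 0 := by
    by_contra! h
    exact hx (by rw [← hxq]; ext y; exact h y)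
  have hqy : q (q y) = q y := by rw [← Module.End.mul_apply, hq.isIdempotentElem.eq]
  have hy0 : ‖q y‖ ≠ 0 := norm_ne_zero_iff.mpr fun h => hy (by rw [h, map_zero])
  have hnorm : inner ℂ (x (q y)) (x (q y)) = c * inner ℂ (q y) (q y) := by
    rw [← adjoint_inner_right, ← star_eq_adjoint, ← Module.End.mul_apply, hc,
      LinearMap.smul_apply, hqy, inner_smul_right]
  rw [inner_self_eq_norm_sq_to_K, inner_self_eq_norm_sq_to_K] at hnorm
  refine ⟨‖q y‖ / ‖x (q y)‖, ?_⟩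
  have hxy0 : (‖x (q y)‖ : ℂ) ≠ 0 := by exact_mod_cast norm_ne_zero_iff.mpr hy
  rw [Complex.star_def, map_div₀, Complex.conj_ofReal, Complex.conj_ofReal]
  field_simp
  linear_combination -hnorm

theorem IsMinimalProjection.exists_partialIsometry {p q a : L} (hp : IsMinimalProjection A p)
    (hq : IsMinimalProjection A q) (ha : a ∈ A) (hx : p * a * q ≠ 0) :
    ∃ v ∈ A, star v * v = q ∧ v * star v = p := by
  have hp2 : p * p = p := hp.isStarProjection.isIdempotentElem.eq
  have hq2 : q * q = q := hq.isStarProjection.isIdempotentElem.eq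
  obtain ⟨c, hc⟩ := hq.exists_star_mul_self_eq_smul hp.mem hp.isStarProjection.isSelfAdjoint ha
  obtain ⟨s, hs⟩ := exists_star_mul_self_mul_eq_one hq.isStarProjection
    (by rw [mul_assoc, hq2]) hx hc
  set v := s • (p * a * q)
  have hvv : star v * v = q := by
    rw [star_smul, smul_mul_smul_comm, hc, smul_smul, hs, one_smul]
  obtain ⟨μ, hμ⟩ : ∃ μ : ℂ, v * star v = μ • p := by
    obtain ⟨c', hc'⟩ := hp.exists_star_mul_self_eq_smul hq.mem hq.isStarProjection.isSelfAdjoint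
      (star_mem ha)
    have hstar : star (q * star a * p) = p * a * q := by
      rw [star_mul, star_mul, star_star, hp.isStarProjection.isSelfAdjoint.star_eq,
        hq.isStarProjection.isSelfAdjoint.star_eq, mul_assoc]
    refine ⟨s * star s * c', ?_⟩
    rw [star_smul, smul_mul_smul_comm, ← hstar, star_star, hc', smul_smul]
  have hidem : v * star v * (v * star v) = v * star v := by
    rw [mul_assoc, ← mul_assoc (star v), hvv, ← mul_assoc,
      mul_eq_self_of_star_mul_self_eq hq.isStarProjection hvv]
  have hμ0 : μ ≠ 0 := by
    rintro rfl
    rw [zero_smul] at hμ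
    have : star v = 0 := eq_zero_of_star_mul_self_eq_zero (by rwa [star_star])
    exact hq.ne_zero (by rw [← hvv, this, zero_mul])
  rw [hμ, smul_mul_smul_comm, hp2] at hidem
  have hμ1 : μ = 1 :=
    mul_left_cancel₀ hμ0 ((smul_left_injective ℂ hp.ne_zero hidem).trans (mul_one μ).symm)
  exact ⟨v, A.smul_mem (mul_mem (mul_mem hp.mem ha) hq.mem) s, hvv, by rw [hμ, hμ1, one_smul]⟩

theorem exists_sum_isMinimalProjection_eq {r : L} (hrA : r ∈ A) (hr : IsStarProjection r) :
    ∃ (d : ℕ) (p : Fin d → L), (∀ i, IsMinimalProjection A (p i)) ∧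
      (∀ i j, i ≠ j → p i * p j = 0) ∧ ∑ i, p i = r := by
  induction hR : range r using WellFoundedLT.induction generalizing r with
  | _ R ih =>
  subst hR
  by_cases hr0 : r = 0
  · exact ⟨0, Fin.elim0, fun i => i.elim0, fun i => i.elim0, by simp [hr0]⟩
  obtain ⟨q, hq, hqr⟩ := exists_isMinimalProjection_mul_eq hrA hr hr0
  have hrq : r * q = q :=
    (hr.isSelfAdjoint.mul_eq_right_iff_mul_eq_left hq.isStarProjection.isSelfAdjoint).mpr hqr
  have hr' : IsStarProjection (r - q) := hq.isStarProjection.sub_of_mul_eq_left hr hqr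
  have hrr' : r * (r - q) = r - q := by rw [mul_sub, hr.isIdempotentElem.eq, hrq]
  have hqr' : q * (r - q) = 0 := by
    rw [mul_sub, hqr, hq.isStarProjection.isIdempotentElem.eq, sub_self]
  have hlt : range (r - q) < range r := by
    refine (range_le_of_mul_eq hrr').lt_of_ne fun h => hq.ne_zero ?_
    simpa using LinearMap.IsStarProjection.ext hr' hr h
  obtain ⟨d, p, hp, horth, hsum⟩ := ih _ hlt (sub_mem hrA hq.mem) hr' rfl
  have hqp : ∀ j, q * p j = 0 := fun j => by
    have : (r - q) * p j = p j := by
      rw [← hsum, Finset.sum_mul, Finset.sum_eq_single j (fun i _ hij => horth i j hij) (by simp),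
        (hp j).isStarProjection.isIdempotentElem.eq]
    rw [← this, ← mul_assoc, hqr', zero_mul]
  have hpq : ∀ i, p i * q = 0 := fun i => by
    simpa only [star_mul, star_zero, hq.isStarProjection.isSelfAdjoint.star_eq,
      (hp i).isStarProjection.isSelfAdjoint.star_eq] using congrArg star (hqp i)
  refine ⟨d + 1, Fin.cons q p, fun i => Fin.cases hq hp i, ?_, by
    rw [Fin.sum_cons, hsum, add_sub_cancel]⟩
  intro i j hij
  induction i using Fin.cases <;> induction j using Fin.cases
  · exact absurd rfl hij
  · exact hqp _
  · exact hpq _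
  · exact horth _ _ fun h => hij (congrArg Fin.succ h)

theorem exists_mul_mul_ne_zero_of_center
    (hcenter : ∀ M ∈ A, (∀ N ∈ A, M * N = N * M) → ∃ c : ℂ, M = c • (1 : L))
    {d : ℕ} {p : Fin d → L} (hp : ∀ i, IsMinimalProjection A (p i))
    (horth : ∀ i j, i ≠ j → p i * p j = 0) (hsum : ∑ i, p i = 1) (i j : Fin d) :
    ∃ a ∈ A, p i * a * p j ≠ 0 := by
  classical
  set S := Finset.univ.filter fun k => ∃ a ∈ A, p k * a * p j ≠ 0
  have hsa : ∀ s : Finset (Fin d), IsSelfAdjoint (∑ k ∈ s, p k) := fun s =>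
    isSelfAdjoint_sum s fun k _ => (hp k).isStarProjection.isSelfAdjoint
  have hblock : ∀ a ∈ A, (∑ k ∈ S, p k) * a * ∑ l ∈ Sᶜ, p l = 0 := by
    intro a ha
    rw [Finset.sum_mul, Finset.sum_mul_sum]
    refine Finset.sum_eq_zero fun k hk => Finset.sum_eq_zero fun l hl => ?_
    refine (hp k).mul_mul_eq_zero_of_forall (hp l).mem (hp l).isStarProjection.isSelfAdjoint
      (Finset.mem_filter.mp hk).2 (fun b hb => ?_) ha
    by_contra h
    exact Finset.mem_compl.mp hl (Finset.mem_filter.mpr ⟨Finset.mem_univ l, b, hb, h⟩)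
  have hcomm : ∀ N ∈ A, (∑ k ∈ S, p k) * N = N * ∑ k ∈ S, p k := fun N hN =>
    commute_of_mul_mul_eq_zero (by rw [Finset.sum_add_sum_compl, hsum]) (hblock N hN) <| by
      simpa only [star_mul, star_star, star_zero, (hsa _).star_eq, mul_assoc]
        using congrArg star (hblock _ (star_mem hN))
  obtain ⟨c, hc⟩ := hcenter _ (sum_mem fun k _ => (hp k).mem) hcomm
  have hmul : ∀ k, p k * ∑ l ∈ S, p l = if k ∈ S then p k else 0 := by
    intro k
    rw [Finset.mul_sum]
    split_ifs with hk
    · rw [Finset.sum_eq_single k (fun l _ hlk => horth k l (Ne.symm hlk)) (absurd hk),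
        (hp k).isStarProjection.isIdempotentElem.eq]
    · exact Finset.sum_eq_zero fun l hl => horth k l fun h => hk (h ▸ hl)
  have hjS : j ∈ S := Finset.mem_filter.mpr ⟨Finset.mem_univ j, 1, one_mem A, by
    rw [mul_one, (hp j).isStarProjection.isIdempotentElem.eq]; exact (hp j).ne_zero⟩
  by_contra! hij
  have hiS : i ∉ S := by simpa [S] using hij
  have hc0 : c = 0 := by
    have := hmul i
    rw [if_neg hiS, hc, mul_smul_comm, mul_one] at this
    exact (smul_eq_zero.mp this).resolve_right (hp i).ne_zero
  have := hmul j
  rw [if_pos hjS, hc, hc0, zero_smul, mul_zero] at this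
  exact (hp j).ne_zero this.symm

theorem exists_matrixUnits
    (hcenter : ∀ M ∈ A, (∀ N ∈ A, M * N = N * M) → ∃ c : ℂ, M = c • (1 : L)) :
    ∃ (d : ℕ) (q : L) (v : Fin d → L), IsStarProjection q ∧
      (∀ a ∈ A, ∃ c : ℂ, q * a * q = c • q) ∧ (∀ i, v i ∈ A) ∧
      (∀ i j, star (v i) * v j = if i = j then q else 0) ∧ ∑ i, v i * star (v i) = 1 := by
  obtain ⟨d, p, hp, horth, hsum⟩ := exists_sum_isMinimalProjection_eq (one_mem A) (.one _)
  cases d with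
  | zero =>
    -- `1 = 0` here, so `E` is trivial
    exact ⟨0, 0, Fin.elim0, .zero _, fun _ _ => ⟨0, by simp⟩, fun i => i.elim0, fun i => i.elim0,
      by simpa using hsum⟩
  | succ d =>
    have hv : ∀ i, ∃ v ∈ A, star v * v = p 0 ∧ v * star v = p i := fun i => by
      obtain ⟨a, ha, hne⟩ := exists_mul_mul_ne_zero_of_center hcenter hp horth hsum i 0
      exact (hp i).exists_partialIsometry (hp 0) ha hne
    choose v hvA hvq hvp using hv
    have hpv : ∀ k, p k * v k = v k := fun k => by
      rw [← hvp, mul_assoc, hvq, mul_eq_self_of_star_mul_self_eq (hp 0).isStarProjection (hvq k)]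
    refine ⟨d + 1, p 0, v, (hp 0).isStarProjection, (hp 0).exists_mul_mul_eq_smul, hvA,
      fun i j => ?_, by simp_rw [hvp, hsum]⟩
    split_ifs with hij
    · rw [← hij, hvq]
    · calc star (v i) * v j = star (p i * v i) * (p j * v j) := by rw [hpv, hpv]
        _ = star (v i) * (p i * p j) * v j := by
          rw [star_mul, (hp i).isStarProjection.isSelfAdjoint.star_eq]; noncomm_ring
        _ = 0 := by rw [horth i j hij, mul_zero, zero_mul]

section MatrixUnits

variable {d : ℕ} {q : E →ₗ[ℂ] E} {v : Fin d → E →ₗ[ℂ] E}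

noncomputable def matrixUnitsFamily (q : L) (v : Fin d → L) :
    Fin d × Fin (Module.finrank ℂ (range q)) → E :=
  fun ib => v ib.1 (stdOrthonormalBasis ℂ (range q) ib.2)

theorem inner_apply_apply_eq_ite (hv : ∀ i j, star (v i) * v j = if i = j then q else 0)
    (i j : Fin d) (x y : E) : inner ℂ (v i x) (v j y) = if i = j then inner ℂ x (q y) else 0 := by
  rw [← adjoint_inner_right, ← star_eq_adjoint, ← Module.End.mul_apply, hv]
  split_ifs <;> simp

theorem orthonormal_matrixUnitsFamily (hq : IsStarProjection q)
    (hv : ∀ i j, star (v i) * v j = if i = j then q else 0) :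
    Orthonormal ℂ (matrixUnitsFamily q v) := by
  rw [orthonormal_iff_ite]
  rintro ⟨i, b⟩ ⟨j, c⟩
  set f := stdOrthonormalBasis ℂ (range q)
  change inner ℂ (v i (f b)) (v j (f c)) = _
  rw [inner_apply_apply_eq_ite hv, hq.isIdempotentElem.mem_range_iff.mp (f c).2,
    ← Submodule.coe_inner, orthonormal_iff_ite.mp f.orthonormal]
  simp only [Prod.mk.injEq, ite_and]

theorem span_matrixUnitsFamily (hq : IsStarProjection q)
    (hv : ∀ i j, star (v i) * v j = if i = j then q else 0) (hsum : ∑ i, v i * star (v i) = 1) :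
    ⊤ ≤ Submodule.span ℂ (Set.range (matrixUnitsFamily q v)) := by
  rintro y -
  rw [← Module.End.one_apply (R := ℂ) y, ← hsum, LinearMap.sum_apply]
  refine Submodule.sum_mem _ fun i _ => ?_
  set f := stdOrthonormalBasis ℂ (range q)
  set w : range q := ⟨star (v i) y, hq.isIdempotentElem.mem_range_iff.mpr <| by
    rw [← Module.End.mul_apply, mul_star_eq_star_of_star_mul_self_eq hq (by simpa using hv i i)]⟩
  rw [Module.End.mul_apply, show star (v i) y = (w : E) from rfl, ← f.sum_repr' w,
    Submodule.coe_sum, map_sum]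
  exact Submodule.sum_mem _ fun b _ => by
    rw [Submodule.coe_smul, map_smul]
    exact Submodule.smul_mem _ _ (Submodule.subset_span ⟨(i, b), rfl⟩)

noncomputable def matrixUnitsBasis (hq : IsStarProjection q)
    (hv : ∀ i j, star (v i) * v j = if i = j then q else 0) (hsum : ∑ i, v i * star (v i) = 1) :
    OrthonormalBasis (Fin d × Fin (Module.finrank ℂ (range q))) ℂ E :=
  OrthonormalBasis.mk (orthonormal_matrixUnitsFamily hq hv) (span_matrixUnitsFamily hq hv hsum)

theorem inner_matrixUnitsFamily_apply (hq : IsStarProjection q)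
    (hv : ∀ i j, star (v i) * v j = if i = j then q else 0) (i j k : Fin d)
    (b : Fin (Module.finrank ℂ (range q))) (y : E) :
    inner ℂ (matrixUnitsFamily q v (i, b)) ((v j * star (v k)) y) =
      if i = j then inner ℂ (matrixUnitsFamily q v (k, b)) y else 0 := by
  rw [matrixUnitsFamily, matrixUnitsFamily, Module.End.mul_apply, inner_apply_apply_eq_ite hv,
    ← Module.End.mul_apply q, mul_star_eq_star_of_star_mul_self_eq hq (by simpa using hv k k),
    star_eq_adjoint, adjoint_inner_right]

theorem matrixUnitsBasis_repr_apply (hq : IsStarProjection q)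
    (hv : ∀ i j, star (v i) * v j = if i = j then q else 0) (hsum : ∑ i, v i * star (v i) = 1)
    (T : Matrix (Fin d) (Fin d) ℂ) (y : E) (ib : Fin d × Fin (Module.finrank ℂ (range q))) :
    (matrixUnitsBasis hq hv hsum).repr ((∑ j, ∑ k, T j k • (v j * star (v k))) y) ib =
      ∑ a, T ib.1 a * (matrixUnitsBasis hq hv hsum).repr y (a, ib.2) := by
  simp only [OrthonormalBasis.repr_apply_apply, matrixUnitsBasis, OrthonormalBasis.coe_mk,
    LinearMap.sum_apply, LinearMap.smul_apply, inner_sum, inner_smul_right,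
    inner_matrixUnitsFamily_apply hq hv, mul_ite, mul_zero]
  simp [Finset.sum_ite_irrel]

theorem mem_iff_exists_matrix (hq : IsStarProjection q)
    (hqA : ∀ a ∈ A, ∃ c : ℂ, q * a * q = c • q) (hvA : ∀ i, v i ∈ A)
    (hv : ∀ i j, star (v i) * v j = if i = j then q else 0) (hsum : ∑ i, v i * star (v i) = 1)
    {M : L} : M ∈ A ↔ ∃ T : Matrix (Fin d) (Fin d) ℂ, M = ∑ j, ∑ k, T j k • (v j * star (v k)) := by
  refine ⟨fun hM => ?_, ?_⟩
  · choose T hT using fun j k => hqA _ (mul_mem (mul_mem (star_mem (hvA j)) hM) (hvA k))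
    have hvq : ∀ i, v i * q = v i := fun i =>
      mul_eq_self_of_star_mul_self_eq hq (by simpa using hv i i)
    have hqv : ∀ i, q * star (v i) = star (v i) := fun i =>
      mul_star_eq_star_of_star_mul_self_eq hq (by simpa using hv i i)
    refine ⟨T, ?_⟩
    calc M = (∑ j, v j * star (v j)) * M * ∑ k, v k * star (v k) := by
          rw [hsum, one_mul, mul_one]
      _ = ∑ j, ∑ k, v j * (q * (star (v j) * M * v k) * q) * star (v k) := by
          rw [Finset.sum_mul, Finset.sum_mul_sum]
          refine Finset.sum_congr rfl fun j _ => Finset.sum_congr rfl fun k _ => ?_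
          rw [show v j * (q * (star (v j) * M * v k) * q) * star (v k) =
            (v j * q) * star (v j) * M * v k * (q * star (v k)) by noncomm_ring,
            hvq, hqv, ← mul_assoc]
      _ = _ := by simp only [hT, mul_smul_comm, smul_mul_assoc, hvq]
  · rintro ⟨T, rfl⟩
    exact sum_mem fun j _ => sum_mem fun k _ => A.smul_mem (mul_mem (hvA j) (star_mem (hvA k))) _

end MatrixUnits

end ArtinWedderburn

theorem artin_wedderburn_factor
    {E : Type*} [NormedAddCommGroup E] [InnerProductSpace ℂ E] [FiniteDimensional ℂ E]
    (A : StarSubalgebra ℂ (E →ₗ[ℂ] E))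
    (hcenter : ∀ M ∈ A, (∀ N ∈ A, M * N = N * M) → ∃ c : ℂ, M = c • (1 : E →ₗ[ℂ] E)) :
    ∃ (dL dR : ℕ) (U : E ≃ₗᵢ[ℂ] EuclideanSpace ℂ (Fin dL × Fin dR)),
      ∀ f : EuclideanSpace ℂ (Fin dL × Fin dR) →ₗ[ℂ] EuclideanSpace ℂ (Fin dL × Fin dR),
        ((∃ M ∈ A, ∀ x : E, f (U x) = U (M x)) ↔
          ∃ T : Matrix (Fin dL) (Fin dL) ℂ,
            ∀ (x : EuclideanSpace ℂ (Fin dL × Fin dR)) (i : Fin dL × Fin dR),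
              f x i = ∑ a : Fin dL, T i.1 a * x (a, i.2)) := by
  obtain ⟨d, q, v, hq, hqA, hvA, hv, hsum⟩ := ArtinWedderburn.exists_matrixUnits hcenter
  set B := ArtinWedderburn.matrixUnitsBasis hq hv hsum
  refine ⟨d, _, B.repr, fun f => ?_⟩
  simp only [ArtinWedderburn.mem_iff_exists_matrix hq hqA hvA hv hsum]
  constructor
  · rintro ⟨M, ⟨T, rfl⟩, hf⟩
    refine ⟨T, fun x i => ?_⟩
    rw [← B.repr.apply_symm_apply x, hf, ArtinWedderburn.matrixUnitsBasis_repr_apply]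
  · rintro ⟨T, hT⟩
    exact ⟨_, ⟨T, rfl⟩, fun x => by ext i; rw [hT, ArtinWedderburn.matrixUnitsBasis_repr_apply]⟩
end
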